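/- arXiv:1607.00565 — 3 statements merged into one kernel-verified Lean document; each statement's English description precedes it below -/
import Mathlib

section
/- Let n ≥ 3. In the positive braid monoid Br_n, the Charney graph — the directed graph whose vertex set is V = S \ {1, Δ_n} (the simple braids other than the unit and the Garside element) and with an edge from x to y if and only if x → y — is strongly connected and contains loops. Precisely: (a) every generator σ_i belongs to V and satisfies σ_i → σ_i; (b) for all x, y ∈ V there exist m ≥ 0 and vertices z_0 = x, z_1, …, z_m = y, all in V, with z_j → z_{j+1} for every 0 ≤ j < m. -/
open scoped Classical

namespace BraidMeasure

/-- Defining relations of the positive braid monoid on `n` strands,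
with Artin generators indexed by `Fin (n - 1)`. -/
inductive BraidRel (n : ℕ) :
    FreeMonoid (Fin (n - 1)) → FreeMonoid (Fin (n - 1)) → Prop
  | comm (i j : Fin (n - 1)) (h : (i : ℕ) + 2 ≤ (j : ℕ)) :
      BraidRel n (FreeMonoid.of i * FreeMonoid.of j)
        (FreeMonoid.of j * FreeMonoid.of i)
  | braid (i j : Fin (n - 1)) (h : (i : ℕ) + 1 = (j : ℕ)) :
      BraidRel n (FreeMonoid.of i * FreeMonoid.of j * FreeMonoid.of i)
        (FreeMonoid.of j * FreeMonoid.of i * FreeMonoid.of j)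

/-- The positive braid monoid `Br_n`, presented by the Artin relations. -/
def BraidMonoid (n : ℕ) : Type := (conGen (BraidRel n)).Quotient

instance (n : ℕ) : Monoid (BraidMonoid n) :=
  inferInstanceAs (Monoid (conGen (BraidRel n)).Quotient)

/-- The Artin generator `σ_{i+1}` of `Br_n`. -/
def gen {n : ℕ} (i : Fin (n - 1)) : BraidMonoid n :=
  (conGen (BraidRel n)).mk' (FreeMonoid.of i)

/-- Left divisibility: `x ≤_l y` iff `∃ z, y = x * z`. -/
def ldvd {n : ℕ} (x y : BraidMonoid n) : Prop := ∃ z, y = x * z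

/-- Right divisibility: `x ≤_r y` iff `∃ z, y = z * x`. -/
def rdvd {n : ℕ} (x y : BraidMonoid n) : Prop := ∃ z, y = z * x

/-- `σ_{i+1}` for a natural number index, with junk value `1` out of range. -/
def gen' {n : ℕ} (i : ℕ) : BraidMonoid n :=
  if h : i < n - 1 then gen ⟨i, h⟩ else 1

/-- The Garside element `Δ_n = (σ_1 ⋯ σ_{n-1})(σ_1 ⋯ σ_{n-2}) ⋯ (σ_1 σ_2) σ_1`. -/
def garside (n : ℕ) : BraidMonoid n :=
  ((List.range (n - 1)).map fun j =>
    ((List.range (n - 1 - j)).map fun i => (gen' i : BraidMonoid n)).prod).prod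

/-- The set of simple braids: left divisors of `Δ_n`. -/
def Simples (n : ℕ) : Set (BraidMonoid n) := {x | ldvd x (garside n)}

/-- `L(y) = {σ_i : σ_i ≤_l y}` (as a set of indices). -/
def Lset {n : ℕ} (y : BraidMonoid n) : Set (Fin (n - 1)) := {i | ldvd (gen i) y}

/-- `R(x) = {σ_i : x · σ_i ∉ S}` (as a set of indices). -/
def Rset {n : ℕ} (x : BraidMonoid n) : Set (Fin (n - 1)) :=
  {i | x * gen i ∉ Simples n}

/-- The relation `x → y` between simple braids: `L(y) ⊆ R(x)`. -/
def Arrow {n : ℕ} (x y : BraidMonoid n) : Prop := Lset y ⊆ Rset x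

/-- The Möbius polynomial of the positive braid monoid:
`H_0 = H_1 = 1`, `H_n = ∑_{k=1}^{n} (-1)^{k+1} t^{k(k-1)/2} H_{n-k}`. -/
noncomputable def mobiusH : ℕ → Polynomial ℤ
  | 0 => 1
  | 1 => 1
  | (n + 2) =>
      ∑ j ∈ Finset.range (n + 2),
        (-1 : Polynomial ℤ) ^ j * Polynomial.X ^ ((j + 1) * j / 2) * mobiusH (n + 1 - j)
  termination_by n => n
  decreasing_by omega

/-!
Send `σ_{i+1}` to the transposition `(i i+1)` of `ℕ`. The number of inversions of the image of a
braid is at most its length, with equality for `Δ_n` (whose image reverses `{0, …, n-1}`), hence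
for every simple braid. So `R(x)` contains the right descents of the permutation of `x`, `L(y)` lies
in the left descents of the permutation of `y`, and `x → y` holds as soon as every left descent of
the second permutation is a right descent of the first. Conversely every permutation of
`{0, …, n-1}` comes from a simple braid: in `Δ_{k+1} = Δ_k · σ_k ⋯ σ_1` a prefix of `σ_k ⋯ σ_1`
moves the position sent to the top into place, and the remaining permutation, which fixes the top,
is lifted inside `Δ_k`.

Strong connectivity is then a question about descent sets. Take a right descent `i` of `x` and a
non-left-descent `m` of `y` (there is one since `y ≠ Δ_n`). The path from `x` to `y` passes through
a cycle with left descents `{i}` and right descents `{⌈n/2⌉ - 1}`, a riffle shuffle with left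
descents `{⌈n/2⌉ - 1}` and every even position a right descent, the permutation listing the odd
values and then the even values decreasingly (left descents even, right descents all but
`⌊n/2⌋ - 1`), and the reversal composed with a cycle (left descents missing `⌊n/2⌋ - 1`, right
descents all but `m`).
-/

open Equiv Finset

section Permutations

def permBelow (n : ℕ) : Subgroup (Perm ℕ) := fixingSubgroup (Perm ℕ) (Set.Ici n)

lemma mem_permBelow {n : ℕ} {ρ : Perm ℕ} : ρ ∈ permBelow n ↔ ∀ m, n ≤ m → ρ m = m := by
  simp [permBelow, mem_fixingSubgroup_iff, Perm.smul_def]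

lemma apply_lt_of_mem_permBelow {n m : ℕ} {ρ : Perm ℕ} (hρ : ρ ∈ permBelow n) (hm : m < n) :
    ρ m < n := by
  by_contra! h
  have := ρ.injective (mem_permBelow.mp hρ _ h)
  omega

lemma swap_mem_permBelow {n i : ℕ} (hi : i + 1 < n) : swap i (i + 1) ∈ permBelow n :=
  mem_permBelow.mpr fun m hm => swap_apply_of_ne_of_ne (by omega) (by omega)

def rev (n : ℕ) : Perm ℕ :=
  Function.Involutive.toPerm (fun m => if m < n then n - 1 - m else m)
    (fun m => by simp only; split_ifs <;> omega)

lemma rev_apply (n m : ℕ) : rev n m = if m < n then n - 1 - m else m := rfl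

lemma rev_inv (n : ℕ) : (rev n)⁻¹ = rev n := rfl

lemma rev_mem_permBelow (n : ℕ) : rev n ∈ permBelow n :=
  mem_permBelow.mpr fun m hm => if_neg (by omega)

def cycleIcc (a l : ℕ) : Perm ℕ where
  toFun p := if p = a then a + l else if a < p ∧ p ≤ a + l then p - 1 else p
  invFun v := if v = a + l then a else if a ≤ v ∧ v < a + l then v + 1 else v
  left_inv p := by simp only; split_ifs <;> omega
  right_inv v := by simp only; split_ifs <;> omega

lemma cycleIcc_apply (a l p : ℕ) :
    cycleIcc a l p = if p = a then a + l else if a < p ∧ p ≤ a + l then p - 1 else p := rfl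

lemma cycleIcc_inv_apply (a l v : ℕ) :
    (cycleIcc a l)⁻¹ v = if v = a + l then a else if a ≤ v ∧ v < a + l then v + 1 else v := rfl

lemma cycleIcc_mem_permBelow {n a l : ℕ} (h : a + l < n) : cycleIcc a l ∈ permBelow n :=
  mem_permBelow.mpr fun m hm => by rw [cycleIcc_apply]; split_ifs <;> omega

lemma swap_adjacent_commute {i j : ℕ} (h : i + 2 ≤ j) :
    swap i (i + 1) * swap j (j + 1) = swap j (j + 1) * swap i (i + 1) := by
  ext m
  simp only [Perm.mul_apply, swap_apply_def]
  split_ifs <;> omega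

lemma swap_adjacent_braid (i : ℕ) :
    swap i (i + 1) * swap (i + 1) (i + 2) * swap i (i + 1) =
      swap (i + 1) (i + 2) * swap i (i + 1) * swap (i + 1) (i + 2) := by
  ext m
  simp only [Perm.mul_apply, swap_apply_def]
  split_ifs <;> omega

def IsDescent (ρ : Perm ℕ) (i : ℕ) : Prop := ρ (i + 1) < ρ i

lemma not_isDescent_iff {ρ : Perm ℕ} {i : ℕ} : ¬IsDescent ρ i ↔ ρ i < ρ (i + 1) := by
  rw [IsDescent, not_lt]
  exact ⟨fun h => h.lt_of_ne (ρ.injective.ne (by omega)), le_of_lt⟩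

lemma isDescent_mul_swap_iff {ρ : Perm ℕ} {i : ℕ} :
    IsDescent (ρ * swap i (i + 1)) i ↔ ¬IsDescent ρ i := by
  rw [not_isDescent_iff, IsDescent, Perm.mul_apply, Perm.mul_apply, swap_apply_left,
    swap_apply_right]

lemma isDescent_swap_iff {i t : ℕ} : IsDescent (swap i (i + 1)) t ↔ t = i := by
  rw [IsDescent, swap_apply_def, swap_apply_def]
  split_ifs <;> omega

lemma isDescent_cycleIcc_iff {a l t : ℕ} (hl : 0 < l) : IsDescent (cycleIcc a l) t ↔ t = a := by
  rw [IsDescent, cycleIcc_apply, cycleIcc_apply]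
  split_ifs <;> omega

lemma isDescent_cycleIcc_inv_iff {a l t : ℕ} (hl : 0 < l) :
    IsDescent (cycleIcc a l)⁻¹ t ↔ t + 1 = a + l := by
  rw [IsDescent, cycleIcc_inv_apply, cycleIcc_inv_apply]
  split_ifs <;> omega

lemma isDescent_rev_mul_iff {n : ℕ} {ρ : Perm ℕ} (hρ : ρ ∈ permBelow n) {i : ℕ} (hi : i + 1 < n) :
    IsDescent (rev n * ρ) i ↔ ¬IsDescent ρ i := by
  have h0 := apply_lt_of_mem_permBelow hρ (show i < n by omega)
  have h1 := apply_lt_of_mem_permBelow hρ hi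
  rw [not_isDescent_iff, IsDescent, Perm.mul_apply, Perm.mul_apply, rev_apply, rev_apply,
    if_pos h0, if_pos h1]
  omega

lemma isDescent_inv_rev_mul_iff {n : ℕ} {ρ : Perm ℕ} {i : ℕ} (hi : i + 1 < n) :
    IsDescent (rev n * ρ)⁻¹ i ↔ ¬IsDescent ρ⁻¹ (n - 2 - i) := by
  rw [mul_inv_rev, rev_inv, not_isDescent_iff, IsDescent, Perm.mul_apply, Perm.mul_apply,
    rev_apply, rev_apply, if_pos hi, if_pos (by omega), show n - 1 - (i + 1) = n - 2 - i by omega,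
    show n - 1 - i = n - 2 - i + 1 by omega]

lemma exists_lt_succ_of_lt {α : Type*} [LinearOrder α] (f : ℕ → α) {a b : ℕ} (hab : a ≤ b)
    (h : f a < f b) : ∃ i, a ≤ i ∧ i < b ∧ f i < f (i + 1) := by
  induction b, hab using Nat.le_induction with
  | base => exact absurd h (lt_irrefl _)
  | succ b hab ih =>
    by_cases hb : f b < f (b + 1)
    · exact ⟨b, hab, b.lt_succ_self, hb⟩
    · obtain ⟨i, hai, hib, hi⟩ := ih (h.trans_le (not_lt.mp hb))
      exact ⟨i, hai, hib.trans b.lt_succ_self, hi⟩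

def inversions (n : ℕ) (ρ : Perm ℕ) : Finset (ℕ × ℕ) :=
  (range n ×ˢ range n).filter fun p => p.1 < p.2 ∧ ρ p.2 < ρ p.1

def invCount (n : ℕ) (ρ : Perm ℕ) : ℕ := (inversions n ρ).card

lemma mem_inversions {n : ℕ} {ρ : Perm ℕ} {p : ℕ × ℕ} :
    p ∈ inversions n ρ ↔ p.1 < n ∧ p.2 < n ∧ p.1 < p.2 ∧ ρ p.2 < ρ p.1 := by
  simp only [inversions, mem_filter, mem_product, mem_range, and_assoc]

lemma invCount_one (n : ℕ) : invCount n 1 = 0 := by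
  simp only [invCount, card_eq_zero, eq_empty_iff_forall_notMem, mem_inversions,
    Perm.one_apply]
  omega

lemma mem_erase_inversions_of_mul_swap {n i : ℕ} {ρ : Perm ℕ} {p : ℕ × ℕ} (hi : i + 1 < n)
    (hp : p ∈ (inversions n (ρ * swap i (i + 1))).erase (i, i + 1)) :
    Prod.map (swap i (i + 1)) (swap i (i + 1)) p ∈ (inversions n ρ).erase (i, i + 1) := by
  obtain ⟨a, b⟩ := p
  simp only [mem_erase, mem_inversions, Prod.map, Perm.mul_apply] at hp ⊢
  obtain ⟨hne, ha, hb, hab, hinv⟩ := hp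
  refine ⟨?_, ?_, ?_, ?_, hinv⟩ <;> simp only [ne_eq, Prod.mk.injEq, swap_apply_def] at hne ⊢ <;>
    split_ifs <;> omega

lemma card_erase_inversions_mul_swap {n i : ℕ} (ρ : Perm ℕ) (hi : i + 1 < n) :
    ((inversions n (ρ * swap i (i + 1))).erase (i, i + 1)).card =
      ((inversions n ρ).erase (i, i + 1)).card := by
  have hρ : ρ = ρ * swap i (i + 1) * swap i (i + 1) := by simp [mul_assoc]
  refine card_nbij' (Prod.map (swap i (i + 1)) (swap i (i + 1)))
    (Prod.map (swap i (i + 1)) (swap i (i + 1))) (fun p hp => ?_) (fun p hp => ?_)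
    (fun p _ => Prod.ext (swap_apply_self ..) (swap_apply_self ..))
    (fun p _ => Prod.ext (swap_apply_self ..) (swap_apply_self ..))
  · exact mem_erase_inversions_of_mul_swap hi hp
  · rw [hρ] at hp
    exact mem_erase_inversions_of_mul_swap hi hp

lemma invCount_mul_swap_add_one {n i : ℕ} {ρ : Perm ℕ} (hi : i + 1 < n) (h : IsDescent ρ i) :
    invCount n (ρ * swap i (i + 1)) + 1 = invCount n ρ := by
  have hmem : (i, i + 1) ∈ inversions n ρ := mem_inversions.mpr ⟨by omega, hi, by omega, h⟩
  have hnot : (i, i + 1) ∉ inversions n (ρ * swap i (i + 1)) := fun hc =>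
    isDescent_mul_swap_iff.mp (mem_inversions.mp hc).2.2.2 h
  have := card_erase_inversions_mul_swap ρ hi
  rw [erase_eq_of_notMem hnot] at this
  rw [invCount, this, card_erase_add_one hmem, invCount]

lemma invCount_mul_swap_of_not_isDescent {n i : ℕ} {ρ : Perm ℕ} (hi : i + 1 < n)
    (h : ¬IsDescent ρ i) : invCount n (ρ * swap i (i + 1)) = invCount n ρ + 1 := by
  simpa [mul_assoc] using (invCount_mul_swap_add_one hi (isDescent_mul_swap_iff.mpr h)).symm

lemma invCount_mul_swap_le {n i : ℕ} (ρ : Perm ℕ) (hi : i + 1 < n) :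
    invCount n (ρ * swap i (i + 1)) ≤ invCount n ρ + 1 := by
  by_cases h : IsDescent ρ i
  · have := invCount_mul_swap_add_one hi h
    omega
  · exact (invCount_mul_swap_of_not_isDescent hi h).le

lemma mem_inversions_inv {n : ℕ} {ρ : Perm ℕ} (hρ : ρ ∈ permBelow n) {p : ℕ × ℕ}
    (hp : p ∈ inversions n ρ) : (ρ p.2, ρ p.1) ∈ inversions n ρ⁻¹ := by
  obtain ⟨h1, h2, h12, hinv⟩ := mem_inversions.mp hp
  refine mem_inversions.mpr ⟨apply_lt_of_mem_permBelow hρ h2, apply_lt_of_mem_permBelow hρ h1,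
    hinv, ?_⟩
  simpa using h12

lemma invCount_inv {n : ℕ} {ρ : Perm ℕ} (hρ : ρ ∈ permBelow n) :
    invCount n ρ⁻¹ = invCount n ρ := by
  have hρ' := inv_mem hρ
  refine card_nbij' (fun p => (ρ⁻¹ p.2, ρ⁻¹ p.1)) (fun p => (ρ p.2, ρ p.1))
    (fun p hp => ?_) (fun p hp => mem_inversions_inv hρ hp) (fun p _ => by simp)
    (fun p _ => by simp)
  simpa using mem_inversions_inv hρ' hp

lemma mem_inversions_rev {n : ℕ} {p : ℕ × ℕ} :
    p ∈ inversions n (rev n) ↔ p.1 < p.2 ∧ p.2 < n := by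
  rw [mem_inversions, rev_apply, rev_apply]
  constructor
  · rintro ⟨-, h2, h12, -⟩
    exact ⟨h12, h2⟩
  · rintro ⟨h12, h2⟩
    refine ⟨by omega, h2, h12, ?_⟩
    split_ifs <;> omega

lemma invCount_rev (n : ℕ) : invCount n (rev n) = ∑ i ∈ range n, i := by
  rw [invCount, card_eq_sum_card_fiberwise (f := Prod.snd) (t := range n)
    fun p hp => mem_range.mpr (mem_inversions_rev.mp hp).2]
  refine sum_congr rfl fun b hb => ?_
  refine (card_nbij' Prod.fst (fun a => (a, b)) (fun p hp => ?_) (fun a ha => ?_)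
    (fun p hp => ?_) (fun a _ => rfl)).trans (card_range b) <;>
    simp only [coe_filter, mem_inversions_rev, Set.mem_ofPred_eq, coe_range, Set.mem_Iio,
      mem_range] at *
  · omega
  · exact ⟨⟨ha, hb⟩, trivial⟩
  · exact Prod.ext rfl hp.2.symm

lemma exists_isDescent_of_invCount_pos {n : ℕ} {ρ : Perm ℕ} (h : 0 < invCount n ρ) :
    ∃ i, i + 1 < n ∧ IsDescent ρ i := by
  obtain ⟨⟨a, b⟩, hp⟩ := card_pos.mp h
  obtain ⟨-, hb, hab, hinv⟩ := mem_inversions.mp hp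
  obtain ⟨i, -, hib, hi⟩ :=
    exists_lt_succ_of_lt (fun m => OrderDual.toDual (ρ m)) hab.le hinv
  exact ⟨i, by omega, hi⟩

lemma exists_not_isDescent_of_invCount_lt {n : ℕ} {ρ : Perm ℕ}
    (h : invCount n ρ < invCount n (rev n)) : ∃ i, i + 1 < n ∧ ¬IsDescent ρ i := by
  obtain ⟨⟨a, b⟩, hrev, hp⟩ :=
    not_subset.mp fun hsub => (card_le_card hsub).not_gt h
  obtain ⟨hab, hb⟩ := mem_inversions_rev.mp hrev
  have hlt : ρ a < ρ b := by
    refine lt_of_le_of_ne (not_lt.mp fun hc => hp ?_) (ρ.injective.ne hab.ne)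
    exact mem_inversions.mpr ⟨by omega, hb, hab, hc⟩
  obtain ⟨i, -, hib, hi⟩ := exists_lt_succ_of_lt ρ hab.le hlt
  exact ⟨i, by omega, not_isDescent_iff.mpr hi⟩

def PermArrow (n : ℕ) (ρ τ : Perm ℕ) : Prop := ∀ i, i + 1 < n → IsDescent τ⁻¹ i → IsDescent ρ i

def IsVertexPerm (n : ℕ) (ρ : Perm ℕ) : Prop :=
  ρ ∈ permBelow n ∧ (∃ i, i + 1 < n ∧ IsDescent ρ i) ∧ ∃ i, i + 1 < n ∧ ¬IsDescent ρ i

def link (i j : ℕ) : Perm ℕ :=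
  if j ≤ i then cycleIcc j (i - j + 1) else (cycleIcc i (j - i + 1))⁻¹

lemma isDescent_link_iff {i j t : ℕ} : IsDescent (link i j) t ↔ t = j := by
  unfold link
  split_ifs with h
  · exact isDescent_cycleIcc_iff (by omega)
  · rw [isDescent_cycleIcc_inv_iff (by omega)]
    omega

lemma isDescent_link_inv_iff {i j t : ℕ} : IsDescent (link i j)⁻¹ t ↔ t = i := by
  unfold link
  split_ifs with h
  · rw [isDescent_cycleIcc_inv_iff (by omega)]
    omega
  · rw [inv_inv]
    exact isDescent_cycleIcc_iff (by omega)

lemma link_mem_permBelow {n i j : ℕ} (hi : i + 1 < n) (hj : j + 1 < n) :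
    link i j ∈ permBelow n := by
  unfold link
  split_ifs
  · exact cycleIcc_mem_permBelow (by omega)
  · exact inv_mem (cycleIcc_mem_permBelow (by omega))

-- In one-line notation: `h, 0, h + 1, 1, h + 2, 2, …` with `h = ⌈n / 2⌉`.
def riffle (n : ℕ) : Perm ℕ where
  toFun p := if p < n then
      (if p % 2 = 1 then p / 2
       else if p / 2 + (n - n / 2) < n then p / 2 + (n - n / 2) else p / 2)
    else p
  invFun v := if v < n then
      (if v < n - n / 2 then (if 2 * v + 1 < n then 2 * v + 1 else 2 * v)
       else 2 * (v - (n - n / 2)))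
    else v
  left_inv p := by simp only; split_ifs <;> omega
  right_inv v := by simp only; split_ifs <;> omega

lemma riffle_apply (n p : ℕ) : riffle n p = if p < n then
      (if p % 2 = 1 then p / 2
       else if p / 2 + (n - n / 2) < n then p / 2 + (n - n / 2) else p / 2)
    else p := rfl

lemma riffle_inv_apply (n v : ℕ) : (riffle n)⁻¹ v = if v < n then
      (if v < n - n / 2 then (if 2 * v + 1 < n then 2 * v + 1 else 2 * v)
       else 2 * (v - (n - n / 2)))
    else v := rfl

lemma riffle_mem_permBelow (n : ℕ) : riffle n ∈ permBelow n :=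
  mem_permBelow.mpr fun m hm => by rw [riffle_apply]; split_ifs <;> omega

lemma eq_of_isDescent_riffle_inv {n i : ℕ} (hi : i + 1 < n) (h : IsDescent (riffle n)⁻¹ i) :
    i = n - n / 2 - 1 := by
  rw [IsDescent, riffle_inv_apply, riffle_inv_apply] at h
  split_ifs at h <;> omega

lemma isDescent_riffle {n i : ℕ} (hi : i + 1 < n) (he : i % 2 = 0) : IsDescent (riffle n) i := by
  rw [IsDescent, riffle_apply, riffle_apply]
  split_ifs <;> omega

def oddsThenEvens (n : ℕ) : Perm ℕ where
  toFun p := if p < n / 2 then 2 * (n / 2 - p) - 1 else if p < n then 2 * (n - 1 - p) else p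
  invFun v := if v < n then (if v % 2 = 1 then n / 2 - (v + 1) / 2 else n - 1 - v / 2) else v
  left_inv p := by simp only; split_ifs <;> omega
  right_inv v := by simp only; split_ifs <;> omega

lemma oddsThenEvens_apply (n p : ℕ) : oddsThenEvens n p =
    if p < n / 2 then 2 * (n / 2 - p) - 1 else if p < n then 2 * (n - 1 - p) else p := rfl

lemma oddsThenEvens_inv_apply (n v : ℕ) : (oddsThenEvens n)⁻¹ v =
    if v < n then (if v % 2 = 1 then n / 2 - (v + 1) / 2 else n - 1 - v / 2) else v := rfl

lemma oddsThenEvens_mem_permBelow (n : ℕ) : oddsThenEvens n ∈ permBelow n :=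
  mem_permBelow.mpr fun m hm => by rw [oddsThenEvens_apply]; split_ifs <;> omega

lemma even_of_isDescent_oddsThenEvens_inv {n i : ℕ} (hi : i + 1 < n)
    (h : IsDescent (oddsThenEvens n)⁻¹ i) : i % 2 = 0 := by
  rw [IsDescent, oddsThenEvens_inv_apply, oddsThenEvens_inv_apply] at h
  split_ifs at h <;> omega

lemma isDescent_oddsThenEvens {n i : ℕ} (hi : i + 1 < n) (hne : i ≠ n / 2 - 1) :
    IsDescent (oddsThenEvens n) i := by
  rw [IsDescent, oddsThenEvens_apply, oddsThenEvens_apply]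
  split_ifs <;> omega

lemma isVertexPerm_of_isDescent_iff {n : ℕ} (hn : 3 ≤ n) {ρ : Perm ℕ} (hρ : ρ ∈ permBelow n) {j : ℕ}
    (hj : j + 1 < n) (h : ∀ t, IsDescent ρ t ↔ t = j) : IsVertexPerm n ρ :=
  ⟨hρ, ⟨j, hj, (h j).mpr rfl⟩,
    ⟨if j = 0 then 1 else 0, by split_ifs <;> omega, by rw [h]; split_ifs <;> omega⟩⟩

lemma isVertexPerm_riffle {n : ℕ} (hn : 3 ≤ n) : IsVertexPerm n (riffle n) := by
  refine ⟨riffle_mem_permBelow n, ⟨0, by omega, isDescent_riffle (by omega) rfl⟩, 1, by omega, ?_⟩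
  rw [not_isDescent_iff, riffle_apply, riffle_apply]
  split_ifs <;> omega

lemma isVertexPerm_oddsThenEvens {n : ℕ} (hn : 3 ≤ n) : IsVertexPerm n (oddsThenEvens n) := by
  refine ⟨oddsThenEvens_mem_permBelow n,
    ⟨n / 2, by omega, isDescent_oddsThenEvens (by omega) (by omega)⟩, n / 2 - 1, by omega, ?_⟩
  rw [not_isDescent_iff, oddsThenEvens_apply, oddsThenEvens_apply]
  split_ifs <;> omega

lemma isVertexPerm_rev_mul_link {n : ℕ} (hn : 3 ≤ n) {i m : ℕ} (hi : i + 1 < n) (hm : m + 1 < n) :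
    IsVertexPerm n (rev n * link i m) := by
  have hρ := link_mem_permBelow hi hm
  refine ⟨mul_mem (rev_mem_permBelow n) hρ, ⟨if m = 0 then 1 else 0, by split_ifs <;> omega, ?_⟩,
    m, hm, ?_⟩
  · rw [isDescent_rev_mul_iff hρ (by split_ifs <;> omega), isDescent_link_iff]
    split_ifs <;> omega
  · rw [isDescent_rev_mul_iff hρ hm, isDescent_link_iff, not_not]

end Permutations

namespace BraidMonoid

variable {n : ℕ}

def lift {M : Type*} [Monoid M] (f : Fin (n - 1) → M)
    (hf : ∀ x y, BraidRel n x y → FreeMonoid.lift f x = FreeMonoid.lift f y) :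
    BraidMonoid n →* M :=
  (conGen (BraidRel n)).lift (FreeMonoid.lift f)
    (Con.conGen_le.mpr fun x y h => (Con.ker_rel _).mpr (hf x y h))

@[elab_as_elim]
lemma gen_mul_induction {P : BraidMonoid n → Prop} (x : BraidMonoid n) (one : P 1)
    (gen_mul : ∀ i x, P x → P (gen i * x)) : P x := by
  induction x using Con.induction_on with
  | H w =>
    induction w using FreeMonoid.inductionOn' with
    | one => exact one
    | of_mul i w ih => exact gen_mul i _ ih

lemma gen'_eq {a : ℕ} (h : a < n - 1) : (gen' a : BraidMonoid n) = gen ⟨a, h⟩ := dif_pos h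

lemma gen'_mul_comm {a b : ℕ} (h : a + 2 ≤ b) (hb : b < n - 1) :
    (gen' a : BraidMonoid n) * gen' b = gen' b * gen' a := by
  rw [gen'_eq (by omega), gen'_eq hb]
  exact (Con.eq _).mpr (.of _ _ (.comm ⟨a, _⟩ ⟨b, hb⟩ h))

lemma gen'_braid {a : ℕ} (h : a + 1 < n - 1) :
    (gen' a : BraidMonoid n) * gen' (a + 1) * gen' a = gen' (a + 1) * gen' a * gen' (a + 1) := by
  rw [gen'_eq (by omega), gen'_eq h]
  exact (Con.eq _).mpr (.of _ _ (.braid ⟨a, _⟩ ⟨a + 1, h⟩ rfl))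

def lengthHom : BraidMonoid n →* Multiplicative ℕ :=
  lift (fun _ => .ofAdd 1) (by rintro _ _ (_ | _) <;> simp)

def length (x : BraidMonoid n) : ℕ := (lengthHom x).toAdd

@[simp] lemma length_one : length (1 : BraidMonoid n) = 0 := rfl

@[simp] lemma length_mul (x y : BraidMonoid n) : length (x * y) = length x + length y := by
  simp [length]

@[simp] lemma length_gen (i : Fin (n - 1)) : length (gen i) = 1 := rfl

lemma length_gen' {a : ℕ} (h : a < n - 1) : length (gen' a : BraidMonoid n) = 1 := by
  rw [gen'_eq h, length_gen]

lemma eq_one_of_length_eq_zero {x : BraidMonoid n} (h : length x = 0) : x = 1 := by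
  induction x using gen_mul_induction with
  | one => rfl
  | gen_mul i x _ => simp at h

lemma exists_eq_gen_of_length_eq_one {x : BraidMonoid n} (h : length x = 1) :
    ∃ i, x = gen i := by
  induction x using gen_mul_induction with
  | one => simp at h
  | gen_mul i x _ =>
    simp only [length_mul, length_gen, add_eq_left] at h
    exact ⟨i, by rw [eq_one_of_length_eq_zero h, mul_one]⟩

def toPerm : BraidMonoid n →* Perm ℕ :=
  lift (fun i => swap (i : ℕ) (i + 1)) (by
    rintro _ _ (⟨i, j, h⟩ | ⟨i, j, h⟩)
    · simpa using swap_adjacent_commute h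
    · simpa [← h] using swap_adjacent_braid (i : ℕ))

@[simp] lemma toPerm_gen (i : Fin (n - 1)) : toPerm (gen i) = swap (i : ℕ) (i + 1) := rfl

lemma toPerm_gen' {a : ℕ} (h : a < n - 1) : toPerm (gen' a : BraidMonoid n) = swap a (a + 1) := by
  rw [gen'_eq h, toPerm_gen]

lemma toPerm_mem_permBelow (x : BraidMonoid n) : toPerm x ∈ permBelow n := by
  induction x using gen_mul_induction with
  | one => rw [map_one]; exact one_mem _
  | gen_mul i x ih =>
    rw [map_mul, toPerm_gen]
    exact mul_mem (swap_mem_permBelow (by omega)) ih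

end BraidMonoid

open BraidMonoid

section Garside

variable {n : ℕ}

def descProd (a : ℕ) : ℕ → BraidMonoid n
  | 0 => 1
  | l + 1 => gen' (a + l) * descProd a l

def ascProd (c : ℕ) : BraidMonoid n := ((List.range c).map fun i => (gen' i : BraidMonoid n)).prod

def partialGarside : ℕ → BraidMonoid n
  | 0 => 1
  | k + 1 => partialGarside k * descProd 0 k

def parabolic (k : ℕ) : Submonoid (BraidMonoid n) :=
  Submonoid.closure {x | ∃ a, a + 1 < k ∧ gen' a = x}

lemma gen'_mem_parabolic {k a : ℕ} (h : a + 1 < k) : (gen' a : BraidMonoid n) ∈ parabolic k :=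
  Submonoid.subset_closure ⟨a, h, rfl⟩

lemma parabolic_mono {k k' : ℕ} (h : k ≤ k') :
    (parabolic k : Submonoid (BraidMonoid n)) ≤ parabolic k' :=
  Submonoid.closure_mono fun _ ⟨a, ha, hx⟩ => ⟨a, by omega, hx⟩

lemma descProd_add (a l l' : ℕ) :
    (descProd a (l + l') : BraidMonoid n) = descProd (a + l) l' * descProd a l := by
  induction l' with
  | zero => simp [descProd]
  | succ l' ih => rw [← add_assoc, descProd, ih, descProd, mul_assoc, add_assoc]

lemma descProd_mem_parabolic {a l k : ℕ} (h : a + l < k) :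
    (descProd a l : BraidMonoid n) ∈ parabolic k := by
  induction l with
  | zero => exact one_mem _
  | succ l ih => exact mul_mem (gen'_mem_parabolic (by omega)) (ih (by omega))

lemma partialGarside_mem_parabolic (k : ℕ) : (partialGarside k : BraidMonoid n) ∈ parabolic k := by
  induction k with
  | zero => exact one_mem _
  | succ k ih =>
    exact mul_mem (parabolic_mono k.le_succ ih) (descProd_mem_parabolic (by omega))

lemma commute_gen'_of_mem_parabolic {k : ℕ} {z : BraidMonoid n} (hk : k < n - 1)
    (hz : z ∈ parabolic k) : Commute (gen' k) z := by
  have : parabolic k ≤ Submonoid.centralizer {(gen' k : BraidMonoid n)} := by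
    refine Submonoid.closure_le.mpr ?_
    rintro _ ⟨a, ha, rfl⟩
    rw [SetLike.mem_coe, Submonoid.mem_centralizer_iff]
    rintro _ rfl
    exact (gen'_mul_comm (by omega) hk).symm
  exact Submonoid.mem_centralizer_iff.mp (this hz) _ rfl

lemma gen'_mul_descProd_zero {a l : ℕ} (h : a + 2 ≤ l) (hl : l ≤ n - 1) :
    gen' a * descProd 0 l = (descProd 0 l : BraidMonoid n) * gen' (a + 1) := by
  induction l, h using Nat.le_induction with
  | base =>
    have hc : Commute (gen' (a + 1)) (descProd 0 a : BraidMonoid n) :=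
      commute_gen'_of_mem_parabolic (by omega) (descProd_mem_parabolic (by omega))
    simp only [descProd, zero_add]
    calc gen' a * (gen' (a + 1) * (gen' a * descProd 0 a))
        = gen' a * gen' (a + 1) * gen' a * (descProd 0 a : BraidMonoid n) := by
          simp only [mul_assoc]
      _ = gen' (a + 1) * gen' a * (gen' (a + 1) * descProd 0 a) := by
          rw [gen'_braid (by omega), mul_assoc]
      _ = gen' (a + 1) * (gen' a * descProd 0 a) * gen' (a + 1) := by
          rw [hc.eq]; simp only [mul_assoc]
  | succ l hl' ih =>
    simp only [descProd, zero_add]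
    rw [← mul_assoc, gen'_mul_comm (by omega) (by omega), mul_assoc, ih (by omega), mul_assoc]

lemma exists_mul_descProd_zero_eq {k : ℕ} {z : BraidMonoid n} (hk : k ≤ n - 1)
    (hz : z ∈ parabolic k) :
    ∃ z' ∈ parabolic (k + 1), z * descProd 0 k = descProd 0 k * z' := by
  induction hz using Submonoid.closure_induction with
  | mem x hx =>
    obtain ⟨a, ha, rfl⟩ := hx
    exact ⟨gen' (a + 1), gen'_mem_parabolic (by omega), gen'_mul_descProd_zero (by omega) hk⟩
  | one => exact ⟨1, one_mem _, by rw [one_mul, mul_one]⟩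
  | mul x y _ _ hx hy =>
    obtain ⟨x', hx', hxe⟩ := hx
    obtain ⟨y', hy', hye⟩ := hy
    exact ⟨x' * y', mul_mem hx' hy', by rw [mul_assoc, hye, ← mul_assoc, hxe, mul_assoc]⟩

lemma ascProd_succ (c : ℕ) : (ascProd (c + 1) : BraidMonoid n) = ascProd c * gen' c := by
  simp [ascProd, List.range_succ]

lemma ascProd_mul_partialGarside {k : ℕ} (hk : k ≤ n - 1) :
    (ascProd k * partialGarside k : BraidMonoid n) = partialGarside k * descProd 0 k := by
  induction k with
  | zero => simp [ascProd, partialGarside, descProd]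
  | succ k ih =>
    have hc := commute_gen'_of_mem_parabolic (by omega) (partialGarside_mem_parabolic (n := n) k)
    calc ascProd (k + 1) * partialGarside (k + 1)
        = ascProd k * (gen' k * partialGarside k) * (descProd 0 k : BraidMonoid n) := by
          simp only [ascProd_succ, partialGarside, mul_assoc]
      _ = (ascProd k * partialGarside k) * (gen' k * descProd 0 k) := by
          rw [hc.eq]; simp only [mul_assoc]
      _ = partialGarside (k + 1) * descProd 0 (k + 1) := by
          rw [ih (by omega)]; simp only [partialGarside, descProd, zero_add]

lemma prod_map_ascProd {c : ℕ} (hc : c ≤ n - 1) :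
    ((List.range c).map fun j => (ascProd (c - j) : BraidMonoid n)).prod =
      partialGarside (c + 1) := by
  induction c with
  | zero => simp [partialGarside, descProd]
  | succ c ih =>
    rw [List.range_succ_eq_map, List.map_cons, List.prod_cons, List.map_map]
    simp only [Function.comp_def, Nat.succ_sub_succ, Nat.sub_zero]
    rw [ih (by omega), ascProd_mul_partialGarside hc]
    rfl

lemma garside_eq_partialGarside : garside n = partialGarside n := by
  rcases n with _ | n
  · rfl
  · exact prod_map_ascProd le_rfl

lemma toPerm_descProd {a l : ℕ} (h : a + l ≤ n - 1) :
    toPerm (descProd a l : BraidMonoid n) = cycleIcc a l := by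
  induction l with
  | zero =>
    ext m
    simp only [descProd, map_one, Perm.one_apply, cycleIcc_apply]
    split_ifs <;> omega
  | succ l ih =>
    rw [descProd, map_mul, toPerm_gen' (by omega), ih (by omega)]
    ext m
    simp only [Perm.mul_apply, cycleIcc_apply, swap_apply_def]
    split_ifs <;> omega

lemma length_descProd {a l : ℕ} (h : a + l ≤ n - 1) :
    length (descProd a l : BraidMonoid n) = l := by
  induction l with
  | zero => rfl
  | succ l ih => rw [descProd, length_mul, length_gen' (by omega), ih (by omega), add_comm]

lemma toPerm_partialGarside {k : ℕ} (hk : k ≤ n) :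
    toPerm (partialGarside k : BraidMonoid n) = rev k := by
  induction k with
  | zero =>
    ext m
    simp only [partialGarside, map_one, Perm.one_apply, rev_apply]
    split_ifs <;> omega
  | succ k ih =>
    rw [partialGarside, map_mul, ih (by omega), toPerm_descProd (by omega)]
    ext m
    simp only [Perm.mul_apply, cycleIcc_apply, rev_apply]
    split_ifs <;> omega

lemma length_partialGarside {k : ℕ} (hk : k ≤ n) :
    length (partialGarside k : BraidMonoid n) = ∑ i ∈ range k, i := by
  induction k with
  | zero => rfl
  | succ k ih =>
    rw [partialGarside, length_mul, ih (by omega), length_descProd (by omega), sum_range_succ]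

lemma toPerm_garside : toPerm (garside n) = rev n := by
  rw [garside_eq_partialGarside, toPerm_partialGarside le_rfl]

lemma length_garside : length (garside n) = invCount n (rev n) := by
  rw [garside_eq_partialGarside, length_partialGarside le_rfl, invCount_rev]

lemma exists_mul_eq_partialGarside {k : ℕ} (hk : k ≤ n) {ρ : Perm ℕ} (hρ : ρ ∈ permBelow k) :
    ∃ x z, z ∈ parabolic k ∧ x * z = (partialGarside k : BraidMonoid n) ∧ toPerm x = ρ := by
  induction k generalizing ρ with
  | zero =>
    refine ⟨1, 1, one_mem _, mul_one _, ?_⟩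
    ext m
    simp [mem_permBelow.mp hρ m m.zero_le]
  | succ k ih =>
    set m := ρ⁻¹ k
    have hρm : ρ m = k := ρ.apply_symm_apply k
    have hm : m ≤ k := by
      by_contra! h
      have := mem_permBelow.mp hρ m h
      omega
    have hρc : ρ * (cycleIcc m (k - m))⁻¹ ∈ permBelow k := by
      refine mem_permBelow.mpr fun v hv => ?_
      rw [Perm.mul_apply, cycleIcc_inv_apply]
      split_ifs <;> first | omega | exact mem_permBelow.mp hρ v (by omega)
    obtain ⟨x, z, hz, hxz, hx⟩ := ih (by omega) hρc
    obtain ⟨z', hz', hzz'⟩ := exists_mul_descProd_zero_eq (by omega) hz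
    have hsplit : (descProd 0 k : BraidMonoid n) = descProd m (k - m) * descProd 0 m := by
      simpa [Nat.add_sub_cancel' hm] using descProd_add (n := n) 0 m (k - m)
    refine ⟨x * descProd m (k - m), descProd 0 m * z',
      mul_mem (descProd_mem_parabolic (by omega)) hz', ?_, ?_⟩
    · calc x * descProd m (k - m) * (descProd 0 m * z')
          = x * descProd 0 k * z' := by rw [hsplit]; simp only [mul_assoc]
        _ = partialGarside (k + 1) := by rw [mul_assoc, ← hzz', ← mul_assoc, hxz]; rfl
    · rw [map_mul, hx, toPerm_descProd (by omega), inv_mul_cancel_right]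

lemma exists_mem_simples_toPerm_eq {ρ : Perm ℕ} (hρ : ρ ∈ permBelow n) :
    ∃ x ∈ Simples n, toPerm x = ρ := by
  obtain ⟨x, z, -, hxz, hx⟩ := exists_mul_eq_partialGarside le_rfl hρ
  exact ⟨x, ⟨z, by rw [garside_eq_partialGarside, hxz]⟩, hx⟩

end Garside

section Simple

variable {n : ℕ}

lemma invCount_mul_toPerm_le (ρ : Perm ℕ) (x : BraidMonoid n) :
    invCount n (ρ * toPerm x) ≤ invCount n ρ + length x := by
  induction x using gen_mul_induction generalizing ρ with
  | one => simp
  | gen_mul i x ih =>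
    rw [map_mul, toPerm_gen, ← mul_assoc, length_mul, length_gen]
    have := ih (ρ * swap (i : ℕ) (i + 1))
    have := invCount_mul_swap_le (n := n) ρ (i := (i : ℕ)) (by omega)
    omega

lemma invCount_toPerm_le_length (x : BraidMonoid n) : invCount n (toPerm x) ≤ length x := by
  simpa [invCount_one] using invCount_mul_toPerm_le 1 x

lemma length_eq_invCount_of_mem_simples {x : BraidMonoid n} (hx : x ∈ Simples n) :
    length x = invCount n (toPerm x) := by
  obtain ⟨z, hz⟩ := hx
  have h1 := invCount_toPerm_le_length x
  have h2 := invCount_mul_toPerm_le (toPerm x) z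
  rw [← map_mul, ← hz, toPerm_garside, ← length_garside, hz, length_mul] at h2
  omega

lemma mul_gen_notMem_simples {x : BraidMonoid n} (hx : x ∈ Simples n) {i : Fin (n - 1)}
    (h : IsDescent (toPerm x) i) : x * gen i ∉ Simples n := by
  intro hxi
  have h1 := length_eq_invCount_of_mem_simples hxi
  have h2 := invCount_mul_swap_add_one (n := n) (by omega) h
  rw [length_mul, length_gen, map_mul, toPerm_gen, length_eq_invCount_of_mem_simples hx] at h1
  omega

lemma isDescent_inv_of_mem_Lset {y : BraidMonoid n} (hy : y ∈ Simples n) {i : Fin (n - 1)}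
    (hi : i ∈ Lset y) : IsDescent (toPerm y)⁻¹ i := by
  obtain ⟨u, rfl⟩ := hi
  by_contra h
  have h1 := invCount_mul_swap_of_not_isDescent (n := n) (by omega) h
  have hu : (toPerm (gen i * u))⁻¹ * swap (i : ℕ) (i + 1) = (toPerm u)⁻¹ := by
    rw [map_mul, toPerm_gen, mul_inv_rev, inv_mul_cancel_right]
  rw [hu, invCount_inv (toPerm_mem_permBelow u), invCount_inv (toPerm_mem_permBelow _),
    ← length_eq_invCount_of_mem_simples hy, length_mul, length_gen] at h1
  have := invCount_toPerm_le_length u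
  omega

lemma arrow_of_permArrow {u v : BraidMonoid n} (hu : u ∈ Simples n) (hv : v ∈ Simples n)
    (h : PermArrow n (toPerm u) (toPerm v)) : Arrow u v :=
  fun i hi => mul_gen_notMem_simples hu (h i (by omega) (isDescent_inv_of_mem_Lset hv hi))

def IsVertex (x : BraidMonoid n) : Prop := x ∈ Simples n ∧ x ≠ 1 ∧ x ≠ garside n

def CharneyEdge (x y : BraidMonoid n) : Prop := IsVertex x ∧ IsVertex y ∧ Arrow x y

lemma charneyEdge_of_permArrow {u v : BraidMonoid n} (hu : IsVertex u) (hv : IsVertex v)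
    (h : PermArrow n (toPerm u) (toPerm v)) : CharneyEdge u v :=
  ⟨hu, hv, arrow_of_permArrow hu.1 hv.1 h⟩

lemma isVertex_of_isVertexPerm {x : BraidMonoid n} (hx : x ∈ Simples n)
    (h : IsVertexPerm n (toPerm x)) : IsVertex x := by
  obtain ⟨-, ⟨i, -, hdesc⟩, ⟨j, hj, hasc⟩⟩ := h
  refine ⟨hx, ?_, ?_⟩
  · rintro rfl
    simp [IsDescent] at hdesc
  · rintro rfl
    rw [toPerm_garside, not_isDescent_iff, rev_apply, rev_apply] at hasc
    split_ifs at hasc <;> omega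

lemma exists_isVertex_toPerm_eq {ρ : Perm ℕ} (h : IsVertexPerm n ρ) :
    ∃ x : BraidMonoid n, IsVertex x ∧ toPerm x = ρ := by
  obtain ⟨x, hx, rfl⟩ := exists_mem_simples_toPerm_eq h.1
  exact ⟨x, isVertex_of_isVertexPerm hx h, rfl⟩

lemma exists_isDescent_of_isVertex {x : BraidMonoid n} (hx : IsVertex x) :
    ∃ i, i + 1 < n ∧ IsDescent (toPerm x) i := by
  refine exists_isDescent_of_invCount_pos ?_
  rw [← length_eq_invCount_of_mem_simples hx.1]
  exact Nat.pos_of_ne_zero fun h => hx.2.1 (eq_one_of_length_eq_zero h)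

lemma exists_not_isDescent_inv_of_isVertex {y : BraidMonoid n} (hy : IsVertex y) :
    ∃ i, i + 1 < n ∧ ¬IsDescent (toPerm y)⁻¹ i := by
  obtain ⟨hyS, -, hyΔ⟩ := hy
  obtain ⟨z, hz⟩ := id hyS
  have hz1 : length z ≠ 0 := fun h => hyΔ (by rw [hz, eq_one_of_length_eq_zero h, mul_one])
  refine exists_not_isDescent_of_invCount_lt ?_
  rw [invCount_inv (toPerm_mem_permBelow y), ← length_eq_invCount_of_mem_simples hyS,
    ← length_garside, hz, length_mul]
  omega

lemma gen_mem_simples (i : Fin (n - 1)) : gen i ∈ Simples n := by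
  have hi : (i : ℕ) + 1 < n := by omega
  obtain ⟨x, hx, hπ⟩ := exists_mem_simples_toPerm_eq (swap_mem_permBelow hi)
  have hlen : length x = 1 := by
    have := invCount_mul_swap_add_one hi (isDescent_swap_iff.mpr rfl)
    rw [swap_mul_self, invCount_one] at this
    rw [length_eq_invCount_of_mem_simples hx, hπ, ← this]
  obtain ⟨j, rfl⟩ := exists_eq_gen_of_length_eq_one hlen
  obtain rfl : j = i := by
    have := congrArg (· (j : ℕ)) hπ
    simp only [toPerm_gen, swap_apply_left, swap_apply_def] at this
    exact Fin.ext (by split_ifs at this <;> omega)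
  exact hx

lemma gen_arrow_gen (i : Fin (n - 1)) : Arrow (gen i) (gen i) :=
  arrow_of_permArrow (gen_mem_simples i) (gen_mem_simples i) fun t _ ht => by simpa using ht

lemma gen_isVertex (hn : 3 ≤ n) (i : Fin (n - 1)) : IsVertex (gen i) := by
  have hi : (i : ℕ) + 1 < n := by omega
  refine isVertex_of_isVertexPerm (gen_mem_simples i) ?_
  rw [toPerm_gen]
  exact isVertexPerm_of_isDescent_iff hn (swap_mem_permBelow hi) hi fun _ => isDescent_swap_iff

lemma reflTransGen_charneyEdge (hn : 3 ≤ n) {x y : BraidMonoid n} (hx : IsVertex x)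
    (hy : IsVertex y) : Relation.ReflTransGen CharneyEdge x y := by
  obtain ⟨i, hi, hxi⟩ := exists_isDescent_of_isVertex hx
  obtain ⟨m, hm, hym⟩ := exists_not_isDescent_inv_of_isVertex hy
  have hr : n - n / 2 - 1 + 1 < n := by omega
  obtain ⟨c, hc, hcπ⟩ := exists_isVertex_toPerm_eq (n := n)
    (isVertexPerm_of_isDescent_iff hn (link_mem_permBelow hi hr) hr fun _ => isDescent_link_iff)
  obtain ⟨u, hu, huπ⟩ := exists_isVertex_toPerm_eq (isVertexPerm_riffle hn)
  obtain ⟨v, hv, hvπ⟩ := exists_isVertex_toPerm_eq (isVertexPerm_oddsThenEvens hn)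
  obtain ⟨w, hw, hwπ⟩ := exists_isVertex_toPerm_eq (isVertexPerm_rev_mul_link hn hr hm)
  refine .head (charneyEdge_of_permArrow hx hc ?_) <| .head (charneyEdge_of_permArrow hc hu ?_) <|
    .head (charneyEdge_of_permArrow hu hv ?_) <| .head (charneyEdge_of_permArrow hv hw ?_) <|
    .single (charneyEdge_of_permArrow hw hy ?_) <;> intro t ht hdesc
  · rw [hcπ, isDescent_link_inv_iff] at hdesc
    exact hdesc ▸ hxi
  · rw [hcπ, isDescent_link_iff]
    exact eq_of_isDescent_riffle_inv ht (huπ ▸ hdesc)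
  · rw [huπ]
    exact isDescent_riffle ht (even_of_isDescent_oddsThenEvens_inv ht (hvπ ▸ hdesc))
  · rw [hwπ, isDescent_inv_rev_mul_iff ht, isDescent_link_inv_iff] at hdesc
    rw [hvπ]
    exact isDescent_oddsThenEvens ht (by omega)
  · rw [hwπ, isDescent_rev_mul_iff (link_mem_permBelow hr hm) ht, isDescent_link_iff]
    rintro rfl
    exact hym hdesc

end Simple

/-- For `n ≥ 3`, the Charney graph of the positive braid monoid,
with vertex set `V = S \ {1, Δ_n}` and edges `x → y`, contains loops at every
generator and is strongly connected. -/
theorem charney_graph_braid (n : ℕ) (hn : 3 ≤ n) :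
    (∀ i : Fin (n - 1),
      gen i ∈ Simples n ∧ gen i ≠ 1 ∧ gen i ≠ garside n ∧ Arrow (gen i) (gen i)) ∧
    (∀ x y : BraidMonoid n,
      x ∈ Simples n → x ≠ 1 → x ≠ garside n →
      y ∈ Simples n → y ≠ 1 → y ≠ garside n →
      Relation.ReflTransGen
        (fun a b => (a ∈ Simples n ∧ a ≠ 1 ∧ a ≠ garside n) ∧
          (b ∈ Simples n ∧ b ≠ 1 ∧ b ≠ garside n) ∧ Arrow a b) x y) :=
  ⟨fun i => ⟨(gen_isVertex hn i).1, (gen_isVertex hn i).2.1, (gen_isVertex hn i).2.2,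
      gen_arrow_gen i⟩,
    fun _ _ hx hx1 hxΔ hy hy1 hyΔ => reflTransGen_charneyEdge hn ⟨hx, hx1, hxΔ⟩ ⟨hy, hy1, hyΔ⟩⟩

end BraidMeasure
end

section
/- Let n ≥ 3. The Möbius polynomial H*_n of the dual braid monoid has a real root q with 0 < q < 1 such that q is a simple root of H*_n (root multiplicity 1) and every complex root z of H*_n with z ≠ q satisfies |z| > q. In particular, H*_n has a unique complex root of smallest modulus, and this root is real, simple, and lies in (0,1). -/
/-! Writing `n = m + 1`, the coefficient identity `(m+k)! / ((m-k)! k! (k+1)!) = C(m+k, 2k) Cat_k`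
gives the Rodrigues-type formula `D^(m-1) (X - X²)^m = m! · X · H*_n`. Since `(X - X²)^m` has
roots of multiplicity `m` at `0` and `1`, Rolle's theorem shows inductively that its `k`-th
derivative (`k < m`) vanishes at `0`, at `1` and at `k` distinct points of `(0, 1)`. For
`k = m - 1` this yields `m` distinct roots of `H*_n` in `(0, 1]`, as many as its degree: all complex
roots are real, positive and simple, and the smallest one lies in `(0, 1)` because `m ≥ 2`. -/

open scoped Classical

namespace BraidMeasure

/-- Index type for the Birman–Ko–Lee generators `σ_{i,j}`, `1 ≤ i < j ≤ n`. -/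
def DualGen (n : ℕ) : Type := {p : Fin n × Fin n // p.1 < p.2}

/-- Defining relations of the dual braid monoid `Br*_n`. -/
inductive DualRel (n : ℕ) :
    FreeMonoid (DualGen n) → FreeMonoid (DualGen n) → Prop
  | tri1 (i j k : Fin n) (hij : i < j) (hjk : j < k) :
      DualRel n (FreeMonoid.of ⟨(i, j), hij⟩ * FreeMonoid.of ⟨(j, k), hjk⟩)
        (FreeMonoid.of ⟨(j, k), hjk⟩ * FreeMonoid.of ⟨(i, k), hij.trans hjk⟩)
  | tri2 (i j k : Fin n) (hij : i < j) (hjk : j < k) :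
      DualRel n (FreeMonoid.of ⟨(j, k), hjk⟩ * FreeMonoid.of ⟨(i, k), hij.trans hjk⟩)
        (FreeMonoid.of ⟨(i, k), hij.trans hjk⟩ * FreeMonoid.of ⟨(i, j), hij⟩)
  | comm1 (i j k l : Fin n) (hij : i < j) (hjk : j < k) (hkl : k < l) :
      DualRel n (FreeMonoid.of ⟨(i, j), hij⟩ * FreeMonoid.of ⟨(k, l), hkl⟩)
        (FreeMonoid.of ⟨(k, l), hkl⟩ * FreeMonoid.of ⟨(i, j), hij⟩)
  | comm2 (i k l j : Fin n) (hik : i < k) (hkl : k < l) (hlj : l < j) :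
      DualRel n
        (FreeMonoid.of ⟨(i, j), hik.trans (hkl.trans hlj)⟩ * FreeMonoid.of ⟨(k, l), hkl⟩)
        (FreeMonoid.of ⟨(k, l), hkl⟩ * FreeMonoid.of ⟨(i, j), hik.trans (hkl.trans hlj)⟩)

/-- The dual braid monoid `Br*_n` (Birman–Ko–Lee). -/
def DualBraidMonoid (n : ℕ) : Type := (conGen (DualRel n)).Quotient

instance (n : ℕ) : Monoid (DualBraidMonoid n) :=
  inferInstanceAs (Monoid (conGen (DualRel n)).Quotient)

/-- The Birman–Ko–Lee generator `σ_{i,j}`. -/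
def genD {n : ℕ} (g : DualGen n) : DualBraidMonoid n :=
  (conGen (DualRel n)).mk' (FreeMonoid.of g)

/-- Left divisibility in `Br*_n`. -/
def ldvdD {n : ℕ} (x y : DualBraidMonoid n) : Prop := ∃ z, y = x * z

/-- `σ_{i+1,i+2}` for a natural number index, with junk value `1` out of range. -/
def genD' {n : ℕ} (i : ℕ) : DualBraidMonoid n :=
  if h : i + 1 < n then
    genD ⟨(⟨i, Nat.lt_of_succ_lt h⟩, ⟨i + 1, h⟩), Fin.mk_lt_mk.mpr (Nat.lt_succ_self i)⟩
  else 1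

/-- The Garside element `δ_n = σ_{1,2} σ_{2,3} ⋯ σ_{n-1,n}` of the dual braid monoid. -/
def garsideD (n : ℕ) : DualBraidMonoid n :=
  ((List.range (n - 1)).map fun i => (genD' i : DualBraidMonoid n)).prod

/-- The set of simple dual braids: left divisors of `δ_n`. -/
def SimplesD (n : ℕ) : Set (DualBraidMonoid n) := {x | ldvdD x (garsideD n)}

/-- `L(y) = {σ_{i,j} : σ_{i,j} ≤_l y}`. -/
def LsetD {n : ℕ} (y : DualBraidMonoid n) : Set (DualGen n) := {g | ldvdD (genD g) y}

/-- `R(x) = {σ_{i,j} : x · σ_{i,j} ∉ S}`. -/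
def RsetD {n : ℕ} (x : DualBraidMonoid n) : Set (DualGen n) :=
  {g | x * genD g ∉ SimplesD n}

/-- The relation `x → y` between simple dual braids: `L(y) ⊆ R(x)`. -/
def ArrowD {n : ℕ} (x y : DualBraidMonoid n) : Prop := LsetD y ⊆ RsetD x

/-- The Möbius polynomial of the dual braid monoid:
`H*_n(t) = ∑_{k=0}^{n-1} (-1)^k ((n-1+k)! / ((n-1-k)!·k!·(k+1)!)) t^k`. -/
noncomputable def mobiusHdual (n : ℕ) : Polynomial ℤ :=
  ∑ k ∈ Finset.range n,
    Polynomial.C ((-1 : ℤ) ^ k *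
      (((n - 1 + k).factorial / ((n - 1 - k).factorial * k.factorial * (k + 1).factorial) : ℕ) : ℤ))
      * Polynomial.X ^ k

end BraidMeasure

open Polynomial Finset
open scoped Nat

theorem catalan_mul_factorial_mul_factorial (k : ℕ) :
    catalan k * ((k + 1)! * k !) = (2 * k)! := by
  have h := Nat.choose_mul_factorial_mul_factorial (show k ≤ 2 * k by omega)
  rw [show 2 * k - k = k by omega] at h
  rw [← h, ← Nat.centralBinom, ← succ_mul_catalan_eq_centralBinom, Nat.factorial_succ]
  ring

theorem Nat.factorial_mul_factorial_mul_factorial_dvd {m k : ℕ} (hk : k ≤ m) :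
    (m - k)! * k ! * (k + 1)! ∣ (m + k)! :=
  calc (m - k)! * k ! * (k + 1)! ∣ (m - k)! * (2 * k)! := by
        rw [← catalan_mul_factorial_mul_factorial, mul_assoc, mul_comm k !]
        exact mul_dvd_mul_left _ (dvd_mul_left _ _)
    _ ∣ (m - k + 2 * k)! := Nat.factorial_mul_factorial_dvd_factorial_add _ _
    _ = (m + k)! := by rw [show m - k + 2 * k = m + k by omega]

theorem exists_finset_deriv_eq_zero {f : ℝ → ℝ} (hf : Differentiable ℝ f) (s : Finset ℝ)
    (hs : ∀ x ∈ s, f x = 0) :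
    ∃ t : Finset ℝ, #s ≤ #t + 1 ∧ (∀ x ∈ t, deriv f x = 0) ∧
      ∀ a b, (s : Set ℝ) ⊆ Set.Icc a b → (t : Set ℝ) ⊆ Set.Ioo a b := by
  induction s using Finset.induction_on_max with
  | empty => exact ⟨∅, by simp, by simp, by simp⟩
  | insert x s hlt ih =>
    obtain ⟨t, hcard, hderiv, hloc⟩ := ih fun y hy => hs y (mem_insert_of_mem hy)
    rcases s.eq_empty_or_nonempty with rfl | hne
    · exact ⟨∅, by simp, by simp, by simp⟩
    have hxs : x ∉ s := fun h => lt_irrefl x (hlt x h)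
    obtain ⟨c, hc, hc0⟩ := exists_deriv_eq_zero (hlt _ (s.max'_mem hne))
      hf.continuous.continuousOn
      (by rw [hs _ (mem_insert_of_mem (s.max'_mem hne)), hs _ (mem_insert_self x s)])
    have hct : c ∉ t := fun h => (hloc (s.min' hne) _
      (fun y hy => ⟨s.min'_le y hy, s.le_max' y hy⟩) h).2.trans hc.1 |>.false
    refine ⟨insert c t, ?_, ?_, fun a b hab => ?_⟩
    · rw [card_insert_of_notMem hxs, card_insert_of_notMem hct]
      omega
    · simpa [hc0] using hderiv
    · have hsab : (s : Set ℝ) ⊆ Set.Icc a b := fun y hy => hab (mem_insert_of_mem hy)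
      rw [coe_insert, Set.insert_subset_iff]
      exact ⟨⟨(hsab (s.max'_mem hne)).1.trans_lt hc.1,
        hc.2.trans_le (hab (mem_insert_self x s)).2⟩, hloc a b hsab⟩

namespace Polynomial

theorem X_sub_X_sq_pow_eq_sum {R : Type*} [CommRing R] (m : ℕ) : ((X : R[X]) - X ^ 2) ^ m =
    ∑ j ∈ range (m + 1), C ((-1) ^ j * (m.choose j : R)) * X ^ (m + j) := by
  rw [sub_eq_neg_add, add_pow]
  refine sum_congr rfl fun j hj => ?_
  have hj : j ≤ m := by rw [mem_range] at hj; omega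
  rw [neg_pow, ← pow_mul, show m + j = 2 * j + (m - j) by omega, pow_add]
  simp only [map_mul, map_pow, map_neg, map_one, map_natCast]
  ring

theorem isRoot_iterate_derivative_X_sub_X_sq_pow {R : Type*} [CommRing R] {k m : ℕ}
    (hk : k < m) :
    (derivative^[k] (((X : R[X]) - X ^ 2) ^ m)).IsRoot 0 ∧
      (derivative^[k] (((X : R[X]) - X ^ 2) ^ m)).IsRoot 1 := by
  have root_of_dvd : ∀ t : R, X - C t ∣ (X : R[X]) - X ^ 2 →
      (derivative^[k] (((X : R[X]) - X ^ 2) ^ m)).IsRoot t := fun t ht =>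
    dvd_iff_isRoot.mp <| (dvd_pow_self _ (by omega)).trans
      (pow_sub_dvd_iterate_derivative_of_pow_dvd k (pow_dvd_pow_of_dvd ht m))
  exact ⟨root_of_dvd 0 ⟨1 - X, by simp; ring⟩, root_of_dvd 1 ⟨-X, by simp; ring⟩⟩

theorem exists_roots_iterate_derivative_X_sub_X_sq_pow {k m : ℕ} (hk : k < m) :
    ∃ s : Finset ℝ, (s : Set ℝ) ⊆ Set.Ioo 0 1 ∧ k ≤ #s ∧
      ∀ x ∈ s, (derivative^[k] (((X : ℝ[X]) - X ^ 2) ^ m)).IsRoot x := by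
  induction k with
  | zero => exact ⟨∅, by simp, le_rfl, by simp⟩
  | succ k ih =>
    obtain ⟨s, hs01, hcard, hroot⟩ := ih (by omega)
    obtain ⟨h0, h1⟩ := isRoot_iterate_derivative_X_sub_X_sq_pow (R := ℝ) (m := m) (k := k)
      (by omega)
    obtain ⟨t, htcard, hderiv, hloc⟩ := exists_finset_deriv_eq_zero
      (Polynomial.differentiable _) (insert 0 (insert 1 s)) (by
        simp only [mem_insert]
        rintro x (rfl | rfl | hx)
        exacts [h0, h1, hroot x hx])
    refine ⟨t, hloc 0 1 ?_, ?_, fun x hx => ?_⟩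
    · simpa [Set.insert_subset_iff] using hs01.trans Set.Ioo_subset_Icc_self
    · have h0s : (0 : ℝ) ∉ insert 1 s := by
        simpa using fun h => (hs01 h).1.false
      have h1s : (1 : ℝ) ∉ s := fun h => (hs01 h).2.false
      rw [card_insert_of_notMem h0s, card_insert_of_notMem h1s] at htcard
      omega
    · rw [Function.iterate_succ_apply', IsRoot, ← Polynomial.deriv]
      exact hderiv x hx

theorem roots_map_ofReal_eq_of_natDegree_le_card {p : ℝ[X]} (hp : p ≠ 0) {S : Finset ℝ}
    (hS : ∀ x ∈ S, p.IsRoot x) (hcard : p.natDegree ≤ #S) :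
    (p.map (algebraMap ℝ ℂ)).roots = (S.image ((↑) : ℝ → ℂ)).val := by
  refine roots_eq_of_natDegree_le_card_of_ne_zero ?_ ?_ (Polynomial.map_ne_zero hp)
  · simp only [mem_image]
    rintro _ ⟨x, hx, rfl⟩
    rw [eval_map_algebraMap, ← Complex.coe_algebraMap,
      aeval_algebraMap_apply_eq_algebraMap_eval, (hS x hx).eq_zero, map_zero]
  · rwa [natDegree_map, card_image_of_injective _ Complex.ofReal_injective]

theorem rootMultiplicity_min'_eq_one_and_min'_lt_norm {P : ℂ[X]} {S : Finset ℝ}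
    (hS : (S : Set ℝ) ⊆ Set.Ioi 0) (hne : S.Nonempty) (hroots : P.roots = (S.image (↑)).val) :
    P.rootMultiplicity (S.min' hne : ℂ) = 1 ∧
      ∀ z : ℂ, P.IsRoot z → z ≠ (S.min' hne : ℂ) → S.min' hne < ‖z‖ := by
  have hP : P ≠ 0 := by
    rintro rfl
    have h := mem_image_of_mem ((↑) : ℝ → ℂ) (S.min'_mem hne)
    rw [← Finset.mem_val, ← hroots, roots_zero] at h
    exact Multiset.notMem_zero _ h
  refine ⟨?_, fun z hz hzq => ?_⟩
  · rw [← count_roots, hroots, Multiset.count_eq_one_of_mem (S.image _).nodup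
      (mem_image_of_mem _ (S.min'_mem hne))]
  · obtain ⟨x, hx, rfl⟩ := mem_image.mp (show z ∈ (S.image (↑)).val by
      rw [← hroots, mem_roots hP]; exact hz)
    rw [Complex.norm_real, Real.norm_of_nonneg (le_of_lt (hS hx))]
    exact (S.min'_le x hx).lt_of_ne fun h => hzq (by rw [h])

end Polynomial

namespace BraidMeasure

theorem mobiusHdual_coeff_zero {n : ℕ} (hn : 0 < n) : (mobiusHdual n).coeff 0 = 1 := by
  simp [mobiusHdual, hn, (Nat.factorial_pos _).ne']

theorem natDegree_mobiusHdual_le (n : ℕ) : (mobiusHdual n).natDegree ≤ n - 1 :=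
  natDegree_sum_le_of_forall_le _ _ fun k hk =>
    (natDegree_C_mul_X_pow_le _ k).trans (by rw [mem_range] at hk; omega)

theorem map_mobiusHdual_succ (m : ℕ) :
    (mobiusHdual (m + 1)).map (algebraMap ℤ ℝ) = ∑ k ∈ range (m + 1),
      C ((-1) ^ k * ((m + k)! / ((m - k)! * k ! * (k + 1)!) : ℝ)) * X ^ k := by
  simp only [mobiusHdual, Polynomial.map_sum, Polynomial.map_mul, Polynomial.map_pow,
    map_C, map_X, add_tsub_cancel_right]
  refine sum_congr rfl fun k hk => ?_
  have hk : k ≤ m := by rw [mem_range] at hk; omega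
  rw [eq_intCast, Int.cast_mul, Int.cast_pow, Int.cast_neg, Int.cast_one, Int.cast_natCast,
    Nat.cast_div (Nat.factorial_mul_factorial_mul_factorial_dvd hk) (by positivity)]
  push_cast
  rfl

theorem iterate_derivative_X_sub_X_sq_pow_eq_mobiusHdual (m : ℕ) (hm : 1 ≤ m) :
    derivative^[m - 1] (((X : ℝ[X]) - X ^ 2) ^ m) =
      C (m ! : ℝ) * (X * (mobiusHdual (m + 1)).map (algebraMap ℤ ℝ)) := by
  rw [X_sub_X_sq_pow_eq_sum, iterate_derivative_sum, map_mobiusHdual_succ, mul_sum, mul_sum]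
  refine sum_congr rfl fun j hj => ?_
  have hj : j ≤ m := by rw [mem_range] at hj; omega
  have hdesc : ((j + 1)! : ℝ) * (m + j).descFactorial (m - 1) = (m + j)! := by
    have h := Nat.factorial_mul_descFactorial (show m - 1 ≤ m + j by omega)
    rw [show m + j - (m - 1) = j + 1 by omega] at h
    exact_mod_cast h
  have hcoeff : (-1) ^ j * (m.choose j : ℝ) * (m + j).descFactorial (m - 1) =
      m ! * ((-1) ^ j * ((m + j)! / ((m - j)! * j ! * (j + 1)!))) := by
    rw [Nat.cast_choose ℝ hj, ← hdesc]
    field_simp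
  rw [iterate_derivative_C_mul, iterate_derivative_X_pow_eq_C_mul,
    show m + j - (m - 1) = j + 1 by omega, ← mul_assoc, ← C_mul, hcoeff, C_mul, pow_succ]
  ring

theorem exists_roots_map_mobiusHdual_succ {m : ℕ} (hm : 2 ≤ m) :
    ∃ S : Finset ℝ, (S : Set ℝ) ⊆ Set.Ioc 0 1 ∧ m ≤ #S ∧ (∃ x ∈ S, x < 1) ∧
      ∀ x ∈ S, ((mobiusHdual (m + 1)).map (algebraMap ℤ ℝ)).IsRoot x := by
  obtain ⟨s, hs01, hcard, hroot⟩ :=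
    exists_roots_iterate_derivative_X_sub_X_sq_pow (show m - 1 < m by omega)
  obtain ⟨y, hy⟩ := card_pos.mp (show 0 < #s by omega)
  have hS : (↑(insert 1 s) : Set ℝ) ⊆ Set.Ioc 0 1 := by
    simpa [Set.insert_subset_iff] using hs01.trans Set.Ioo_subset_Ioc_self
  refine ⟨insert 1 s, hS, ?_, ⟨y, mem_insert_of_mem hy, (hs01 hy).2⟩, fun x hx => ?_⟩
  · rw [card_insert_of_notMem fun h => (hs01 h).2.false]
    omega
  have hfx : (derivative^[m - 1] (((X : ℝ[X]) - X ^ 2) ^ m)).IsRoot x := by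
    rcases mem_insert.mp hx with rfl | hxs
    exacts [(isRoot_iterate_derivative_X_sub_X_sq_pow (show m - 1 < m by omega)).2, hroot x hxs]
  rw [iterate_derivative_X_sub_X_sq_pow_eq_mobiusHdual m (by omega), IsRoot, eval_mul, eval_C,
    eval_mul, eval_X] at hfx
  exact (mul_eq_zero.mp ((mul_eq_zero.mp hfx).resolve_left (by positivity))).resolve_left
    (hS hx).1.ne'

/-- For `n ≥ 3`, the Möbius polynomial `H*_n` of the dual braid
monoid has a unique root of smallest modulus; this root is real, simple and lies
in `(0,1)`. -/
theorem mobiusHdual_unique_smallest_root (n : ℕ) (hn : 3 ≤ n) :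
    ∃ q : ℝ, 0 < q ∧ q < 1 ∧
      Polynomial.aeval q (mobiusHdual n) = 0 ∧
      Polynomial.rootMultiplicity (q : ℂ) ((mobiusHdual n).map (algebraMap ℤ ℂ)) = 1 ∧
      ∀ z : ℂ, Polynomial.aeval z (mobiusHdual n) = 0 → z ≠ (q : ℂ) → q < ‖z‖ := by
  obtain ⟨m, rfl⟩ : ∃ m, n = m + 1 := ⟨n - 1, by omega⟩
  obtain ⟨S, hS, hcard, ⟨x, hxS, hx1⟩, hroot⟩ :=
    exists_roots_map_mobiusHdual_succ (show 2 ≤ m by omega)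
  have hH0 : (mobiusHdual (m + 1)).map (algebraMap ℤ ℝ) ≠ 0 := fun h => by
    simpa [mobiusHdual_coeff_zero] using congrArg (coeff · 0) h
  have hroots := roots_map_ofReal_eq_of_natDegree_le_card hH0 hroot
    (natDegree_map_le.trans ((natDegree_mobiusHdual_le _).trans hcard))
  rw [Polynomial.map_map, ← IsScalarTower.algebraMap_eq] at hroots
  obtain ⟨hmult, hmin⟩ := rootMultiplicity_min'_eq_one_and_min'_lt_norm
    (hS.trans Set.Ioc_subset_Ioi_self) ⟨x, hxS⟩ hroots
  refine ⟨_, (hS (S.min'_mem _)).1, (S.min'_le x hxS).trans_lt hx1,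
    by rw [← eval_map_algebraMap]; exact hroot _ (S.min'_mem _), hmult,
    fun z hz hzq => hmin z (by rwa [IsRoot, eval_map_algebraMap]) hzq⟩

end BraidMeasure
end

section
/- Let f, h : Br_n → ℝ be functions such that Σ_{x ∈ Br_n} |f(x)| and Σ_{x ∈ Br_n} |h(x)| are convergent. Then h is the Möbius transform of f, i.e. h(x) = Σ_{X ⊆ Σ} (−1)^{|X|} f(x·Δ̂(X)) for every x ∈ Br_n (a finite sum over the subsets X of the generating set Σ), if and only if f(x) = Σ_{y ∈ Br_n} h(x·y) for every x ∈ Br_n (the latter series converging absolutely). -/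
/-!
Garside's argument. If `σ_i u = σ_j v` for words `u`, `v`, then `u` and `v` are the complements
of `σ_i` and `σ_j` in their lcm (`σ_j` and `σ_i` if `|i - j| ≥ 2`, `σ_j σ_i` and `σ_i σ_j` if
`|i - j| = 1`), followed by a common word. This is proved by induction on the length of `u` and
then on the number of elementary moves, and everything reduces to a cube condition on three
letters. Taking `i = j` gives left cancellativity; reversing words gives right cancellativity.

Since `Δ̂(X) ≤_l z` exactly when every `σ ∈ X` left-divides `z`, the sum
`∑_X (-1)^{|X|} [Δ̂(X) ≤_l z]` is the alternating sum over the subsets of `{σ : σ ≤_l z}`, which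
vanishes unless this set is empty, that is unless `z = 1`. By cancellativity `∑_y h(x Δ̂(X) y)`
is the sum of `h(x z)` over `Δ̂(X) ≤_l z`, so the alternating sum of the `f(x Δ̂(X))` collapses
to `h(x)`. The other direction is the same computation for right divisibility.
-/

open scoped Classical

namespace BraidMeasure

section Mobius

open MulOpposite

variable {M ι : Type*} [Monoid M] [Fintype ι] (a : ι → M) (D : Finset ι → M)

theorem sum_neg_one_pow_mul_ite_subset (S : Finset ι) (c : ℝ) :
    ∑ X : Finset ι, (-1 : ℝ) ^ X.card * (if X ⊆ S then c else 0) =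
      if S = ∅ then c else 0 := by
  have hS : ∑ X ∈ S.powerset, (-1 : ℝ) ^ X.card = if S = ∅ then 1 else 0 := by
    exact_mod_cast Finset.sum_powerset_neg_one_pow_card
  simp_rw [mul_ite, mul_zero, ← Finset.mem_powerset]
  rw [Finset.sum_ite_mem, Finset.univ_inter, ← Finset.sum_mul, hS, ite_mul, one_mul, zero_mul]

theorem sum_neg_one_pow_mul_tsum_mul_left [IsLeftCancelMul M]
    (hD : ∀ X, (∀ i ∈ X, a i ∣ D X) ∧ ∀ z, (∀ i ∈ X, a i ∣ z) → D X ∣ z)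
    (ha : ∀ z, (∃ i, a i ∣ z) ↔ z ≠ 1) {g : M → ℝ} (hg : Summable g) :
    ∑ X : Finset ι, (-1 : ℝ) ^ X.card * ∑' y, g (D X * y) = g 1 := by
  let S (z : M) : Finset ι := Finset.univ.filter fun i => a i ∣ z
  have hDS : ∀ X z, D X ∣ z ↔ X ⊆ S z := fun X z => by
    simpa [S, Finset.subset_iff] using ⟨fun hd i hi => ((hD X).1 i hi).trans hd, (hD X).2 z⟩
  have hS : ∀ z, S z = ∅ ↔ z = 1 := fun z => by
    simpa [S, Finset.filter_eq_empty_iff] using (ha z).not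
  have hreindex : ∀ X, ∑' y, g (D X * y) = ∑' z, if X ⊆ S z then g z else 0 := fun X => by
    refine Eq.trans ?_ ((mul_right_injective (D X)).tsum_eq fun z hz => ?_)
    · simp [← hDS]
    · obtain ⟨y, rfl⟩ := (hDS X z).2 (by by_contra h; simp [h] at hz)
      exact ⟨y, rfl⟩
  calc ∑ X : Finset ι, (-1 : ℝ) ^ X.card * ∑' y, g (D X * y)
      = ∑' z, ∑ X : Finset ι, (-1 : ℝ) ^ X.card * (if X ⊆ S z then g z else 0) := by
        simp_rw [hreindex, ← tsum_mul_left]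
        refine (Summable.tsum_finsetSum fun X _ => Summable.mul_left _ ?_).symm
        exact (hg.indicator {z | X ⊆ S z}).congr fun z => by simp [Set.indicator_apply]
    _ = ∑' z, if z = 1 then g z else 0 := by simp_rw [sum_neg_one_pow_mul_ite_subset, hS]
    _ = g 1 := tsum_ite_eq 1 g

theorem eq_mobius_of_eq_tsum_mul [IsLeftCancelMul M]
    (hD : ∀ X, (∀ i ∈ X, a i ∣ D X) ∧ ∀ z, (∀ i ∈ X, a i ∣ z) → D X ∣ z)
    (ha : ∀ z, (∃ i, a i ∣ z) ↔ z ≠ 1) {f h : M → ℝ} (hh : Summable h)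
    (hfh : ∀ x, f x = ∑' y, h (x * y)) (x : M) :
    h x = ∑ X : Finset ι, (-1 : ℝ) ^ X.card * f (x * D X) := by
  have key := sum_neg_one_pow_mul_tsum_mul_left a D hD ha
    (hh.comp_injective (mul_right_injective x))
  simp only [Function.comp_apply, mul_one, ← mul_assoc, ← hfh] at key
  exact key.symm

theorem op_dvd_op_iff {x y : M} : op x ∣ op y ↔ ∃ c, y = c * x :=
  ⟨fun ⟨c, h⟩ => ⟨unop c, congrArg unop h⟩, fun ⟨c, h⟩ => ⟨op c, by rw [h]; rfl⟩⟩

theorem eq_tsum_mul_of_eq_mobius [IsCancelMul M]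
    (hD : ∀ X, (∀ i ∈ X, ∃ c, D X = c * a i) ∧
      ∀ z, (∀ i ∈ X, ∃ c, z = c * a i) → ∃ c, z = c * D X)
    (ha : ∀ z, (∃ i c, z = c * a i) ↔ z ≠ 1) {f h : M → ℝ} (hf : Summable f)
    (hhf : ∀ x, h x = ∑ X : Finset ι, (-1 : ℝ) ^ X.card * f (x * D X)) (x : M) :
    f x = ∑' y, h (x * y) := by
  have hD' : ∀ X, (∀ i ∈ X, op (a i) ∣ op (D X)) ∧
      ∀ z : Mᵐᵒᵖ, (∀ i ∈ X, op (a i) ∣ z) → op (D X) ∣ z := fun X => by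
    simpa only [op_surjective.forall, op_dvd_op_iff] using hD X
  have ha' : ∀ z : Mᵐᵒᵖ, (∃ i, op (a i) ∣ z) ↔ z ≠ 1 := by
    simpa only [op_surjective.forall, op_dvd_op_iff, ne_eq, op_eq_one_iff] using ha
  have key := sum_neg_one_pow_mul_tsum_mul_left (op ∘ a) (op ∘ D) hD' ha'
    ((hf.comp_injective (mul_right_injective x)).comp_injective unop_injective)
  have hsum : ∀ X, Summable fun y => f (x * (y * D X)) := fun X =>
    hf.comp_injective ((mul_right_injective x).comp (mul_left_injective (D X)))
  calc f x = ∑ X : Finset ι, (-1 : ℝ) ^ X.card * ∑' y, f (x * (y * D X)) := by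
        simp_rw [← opEquiv.tsum_eq] at key
        simpa using key.symm
    _ = ∑' y, h (x * y) := by
        simp_rw [hhf, mul_assoc, ← tsum_mul_left]
        exact (Summable.tsum_finsetSum fun X _ => (hsum X).mul_left _).symm

end Mobius

section Letters

variable {m : ℕ}

def Far (i j : Fin m) : Prop := (i : ℕ) + 2 ≤ j ∨ (j : ℕ) + 2 ≤ i

def Adj (i j : Fin m) : Prop := (i : ℕ) + 1 = j ∨ (j : ℕ) + 1 = i

theorem Far.symm {i j : Fin m} (h : Far i j) : Far j i := Or.symm h

theorem Adj.symm {i j : Fin m} (h : Adj i j) : Adj j i := Or.symm h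

theorem Far.ne {i j : Fin m} (h : Far i j) : i ≠ j := by
  rintro rfl; unfold Far at h; omega

theorem Adj.ne {i j : Fin m} (h : Adj i j) : i ≠ j := by
  rintro rfl; unfold Adj at h; omega

theorem Far.not_adj {i j : Fin m} (h : Far i j) : ¬Adj i j := by
  unfold Far Adj at *; omega

theorem far_or_adj_of_ne {i j : Fin m} (h : i ≠ j) : Far i j ∨ Adj i j := by
  have : (i : ℕ) ≠ j := Fin.val_ne_of_ne h
  unfold Far Adj; omega

theorem Adj.not_adj_of_adj {i q j : Fin m} (hiq : Adj i q) (hqj : Adj q j) : ¬Adj i j := by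
  unfold Adj at *; omega

end Letters

inductive BraidMove (m : ℕ) : List (Fin m) → List (Fin m) → Prop
  | swap (a b : List (Fin m)) {i j : Fin m} (h : Far i j) :
      BraidMove m (a ++ i :: j :: b) (a ++ j :: i :: b)
  | braid (a b : List (Fin m)) {i j : Fin m} (h : Adj i j) :
      BraidMove m (a ++ i :: j :: i :: b) (a ++ j :: i :: j :: b)

def BraidEquiv (m : ℕ) : List (Fin m) → List (Fin m) → Prop :=
  Relation.ReflTransGen (BraidMove m)

instance {m : ℕ} : Trans (BraidEquiv m) (BraidEquiv m) (BraidEquiv m) :=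
  inferInstanceAs (Trans (Relation.ReflTransGen _) (Relation.ReflTransGen _) _)

local infix:50 " ≈ᵇ " => BraidEquiv _

section Words

variable {m : ℕ}

namespace BraidMove

variable {u v : List (Fin m)}

theorem symm (h : BraidMove m u v) : BraidMove m v u := by
  cases h with
  | swap a b h => exact swap a b h.symm
  | braid a b h => exact braid a b h.symm

theorem length_eq (h : BraidMove m u v) : u.length = v.length := by
  cases h <;> simp

theorem append_append (c d : List (Fin m)) (h : BraidMove m u v) :
    BraidMove m (c ++ u ++ d) (c ++ v ++ d) := by
  cases h with
  | swap a b h => simpa using swap (c ++ a) (b ++ d) h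
  | braid a b h => simpa using braid (c ++ a) (b ++ d) h

theorem reverse (h : BraidMove m u v) : BraidMove m u.reverse v.reverse := by
  cases h with
  | swap a b h => simpa using swap b.reverse a.reverse h.symm
  | braid a b h => simpa using braid b.reverse a.reverse h

end BraidMove

namespace BraidEquiv

variable {u v w : List (Fin m)}

@[refl] theorem refl (u : List (Fin m)) : u ≈ᵇ u := Relation.ReflTransGen.refl

theorem trans (h : u ≈ᵇ v) (h' : v ≈ᵇ w) : u ≈ᵇ w := Relation.ReflTransGen.trans h h'

theorem of_move (h : BraidMove m u v) : u ≈ᵇ v := Relation.ReflTransGen.single h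

theorem symm (h : u ≈ᵇ v) : v ≈ᵇ u := by
  induction h with
  | refl => rfl
  | tail _ s ih => exact Relation.ReflTransGen.head s.symm ih

theorem length_eq (h : u ≈ᵇ v) : u.length = v.length := by
  induction h with
  | refl => rfl
  | tail _ s ih => exact ih.trans s.length_eq

theorem append_append (c d : List (Fin m)) (h : u ≈ᵇ v) : c ++ u ++ d ≈ᵇ c ++ v ++ d :=
  Relation.ReflTransGen.lift (fun w => c ++ w ++ d) (fun _ _ s => s.append_append c d) _ _ h

theorem append_left (c : List (Fin m)) (h : u ≈ᵇ v) : c ++ u ≈ᵇ c ++ v := by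
  simpa using h.append_append c []

theorem append_right (d : List (Fin m)) (h : u ≈ᵇ v) : u ++ d ≈ᵇ v ++ d := by
  simpa using h.append_append [] d

theorem cons (x : Fin m) (h : u ≈ᵇ v) : x :: u ≈ᵇ x :: v := h.append_left [x]

theorem reverse (h : u ≈ᵇ v) : u.reverse ≈ᵇ v.reverse :=
  Relation.ReflTransGen.lift List.reverse (fun _ _ s => BraidMove.reverse s) _ _ h

theorem swap {i j : Fin m} (h : Far i j) (w : List (Fin m)) : i :: j :: w ≈ᵇ j :: i :: w :=
  of_move (BraidMove.swap [] w h)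

theorem braid {i j : Fin m} (h : Adj i j) (w : List (Fin m)) :
    i :: j :: i :: w ≈ᵇ j :: i :: j :: w :=
  of_move (BraidMove.braid [] w h)

theorem cons_append_of_far {q : Fin m} {r : List (Fin m)} (h : ∀ x ∈ r, Far q x)
    (w : List (Fin m)) : q :: (r ++ w) ≈ᵇ r ++ q :: w := by
  induction r with
  | nil => rfl
  | cons x r ih =>
    simp only [List.mem_cons, forall_eq_or_imp] at h
    exact (swap h.1 _).trans ((ih h.2).cons x)

end BraidEquiv

/-- `i :: complement i j` and `j :: complement j i` both spell the lcm of `σ_i` and `σ_j`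
for `≤_l`. -/
noncomputable def complement (i j : Fin m) : List (Fin m) :=
  if i = j then [] else if Far i j then [j] else [j, i]

@[simp] theorem complement_self (i : Fin m) : complement i i = [] := if_pos rfl

theorem complement_of_far {i j : Fin m} (h : Far i j) : complement i j = [j] := by
  rw [complement, if_neg h.ne, if_pos h]

theorem complement_of_adj {i j : Fin m} (h : Adj i j) : complement i j = [j, i] := by
  rw [complement, if_neg h.ne, if_neg fun h' => h'.not_adj h]

theorem length_complement_comm (i j : Fin m) :
    (complement i j).length = (complement j i).length := by
  rcases eq_or_ne i j with rfl | hij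
  · rfl
  rcases far_or_adj_of_ne hij with h | h
  · rw [complement_of_far h, complement_of_far h.symm]; rfl
  · rw [complement_of_adj h, complement_of_adj h.symm]; rfl

theorem mem_complement {i j x : Fin m} (hx : x ∈ complement i j) : x = i ∨ x = j := by
  unfold complement at hx
  split_ifs at hx <;> simp_all only [List.mem_cons, List.not_mem_nil] <;> tauto

/-- A move on `i :: u` either happens inside `u`, or rewrites the lcm of `i` and another
letter `q` at the front. -/
theorem BraidMove.cons_cases {i : Fin m} {u z : List (Fin m)} (h : BraidMove m (i :: u) z) :
    (∃ u', z = i :: u' ∧ BraidMove m u u') ∨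
      ∃ q b, u = complement i q ++ b ∧ z = q :: (complement q i ++ b) := by
  generalize hiu : i :: u = iu at h
  cases h with
  | swap a b h =>
    rcases a with _ | ⟨x, a⟩
    · simp only [List.nil_append, List.cons.injEq] at hiu ⊢
      obtain ⟨rfl, rfl⟩ := hiu
      exact .inr ⟨_, b, by rw [complement_of_far h]; rfl, by simp [complement_of_far h.symm]⟩
    · simp only [List.cons_append, List.cons.injEq] at hiu ⊢
      obtain ⟨rfl, rfl⟩ := hiu
      exact .inl ⟨_, ⟨rfl, rfl⟩, .swap a b h⟩
  | braid a b h =>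
    rcases a with _ | ⟨x, a⟩
    · simp only [List.nil_append, List.cons.injEq] at hiu ⊢
      obtain ⟨rfl, rfl⟩ := hiu
      exact .inr ⟨_, b, by rw [complement_of_adj h]; rfl, by simp [complement_of_adj h.symm]⟩
    · simp only [List.cons_append, List.cons.injEq] at hiu ⊢
      obtain ⟨rfl, rfl⟩ := hiu
      exact .inl ⟨_, ⟨rfl, rfl⟩, .braid a b h⟩

/-- Garside's lemma for words `u` shorter than `ℓ`: `i u = j v` factors through the lcm of `i`
and `j`. -/
def HasLcmBelow (m ℓ : ℕ) : Prop :=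
  ∀ (i j : Fin m) (u v : List (Fin m)), u.length < ℓ → i :: u ≈ᵇ j :: v →
    ∃ w, u ≈ᵇ complement i j ++ w ∧ v ≈ᵇ complement j i ++ w

namespace HasLcmBelow

variable {ℓ : ℕ} {i j : Fin m} {u v : List (Fin m)}

theorem mono {ℓ' : ℕ} (H : HasLcmBelow m ℓ) (h : ℓ' ≤ ℓ) : HasLcmBelow m ℓ' :=
  fun i j u v hu => H i j u v (hu.trans_le h)

theorem cancel (H : HasLcmBelow m ℓ) (hu : u.length < ℓ) (h : i :: u ≈ᵇ i :: v) : u ≈ᵇ v := by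
  obtain ⟨w, hu, hv⟩ := H i i u v hu h
  rw [complement_self, List.nil_append] at hu hv
  exact hu.trans hv.symm

theorem cancel_append {r : List (Fin m)} (H : HasLcmBelow m ℓ) (hu : (r ++ u).length ≤ ℓ)
    (h : r ++ u ≈ᵇ r ++ v) : u ≈ᵇ v := by
  induction r with
  | nil => simpa using h
  | cons x r ih =>
    simp only [List.cons_append, List.length_cons] at hu h
    exact ih (by omega) (H.cancel (by omega) h)

theorem of_far (H : HasLcmBelow m ℓ) (hu : u.length < ℓ) (hij : Far i j)
    (h : i :: u ≈ᵇ j :: v) : ∃ w, u ≈ᵇ j :: w ∧ v ≈ᵇ i :: w := by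
  simpa [complement_of_far hij, complement_of_far hij.symm] using H i j u v hu h

theorem of_adj (H : HasLcmBelow m ℓ) (hu : u.length < ℓ) (hij : Adj i j)
    (h : i :: u ≈ᵇ j :: v) : ∃ w, u ≈ᵇ j :: i :: w ∧ v ≈ᵇ i :: j :: w := by
  simpa [complement_of_adj hij, complement_of_adj hij.symm] using H i j u v hu h

end HasLcmBelow

/-- The cube condition for the letters `i, q, j`, given Garside's lemma for shorter words. -/
def Cube (i q j : Fin m) (b w₁ : List (Fin m)) : Prop :=
  HasLcmBelow m (complement q i ++ b).length →
    complement q i ++ b ≈ᵇ complement q j ++ w₁ →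
      ∃ w, complement i q ++ b ≈ᵇ complement i j ++ w ∧
        complement j q ++ w₁ ≈ᵇ complement j i ++ w

variable {i q j : Fin m} {b w₁ : List (Fin m)}

theorem Cube.swap (hc : Cube i q j b w₁) : Cube j q i w₁ b := fun H h =>
  (hc (h.length_eq ▸ H) h.symm).imp fun _ => And.symm

theorem cube_self (i q : Fin m) (b w₁ : List (Fin m)) : Cube i q i b w₁ := fun H h => by
  refine ⟨complement i q ++ b, by rw [complement_self]; rfl, ?_⟩
  rw [complement_self, List.nil_append]
  exact (H.cancel_append le_rfl h).symm.append_left _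

theorem cube_far_far (hiq : Far i q) (hjq : Far j q) : Cube i q j b w₁ := fun H h => by
  rw [complement_of_far hiq.symm, complement_of_far hjq.symm] at h
  rw [complement_of_far hiq.symm] at H
  simp only [List.singleton_append] at h
  obtain ⟨w, hb, hw₁⟩ := H i j b w₁ (by simp) h
  have far_of_mem : ∀ {x y}, Far x q → Far y q → ∀ z ∈ complement x y, Far q z :=
    fun hx hy z hz => (mem_complement hz).elim (· ▸ hx.symm) (· ▸ hy.symm)
  refine ⟨q :: w, ?_, ?_⟩
  · rw [complement_of_far hiq, List.singleton_append]
    exact (hb.cons q).trans (BraidEquiv.cons_append_of_far (far_of_mem hiq hjq) w)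
  · rw [complement_of_far hjq, List.singleton_append]
    exact (hw₁.cons q).trans (BraidEquiv.cons_append_of_far (far_of_mem hjq hiq) w)

theorem cube_far_adj_far (hiq : Far i q) (hjq : Adj j q) (hij : Far i j) :
    Cube i q j b w₁ := fun H h => by
  rw [complement_of_far hiq.symm, complement_of_adj hjq.symm] at h
  rw [complement_of_far hiq.symm] at H
  rw [complement_of_far hiq, complement_of_far hij, complement_of_adj hjq,
    complement_of_far hij.symm]
  simp only [List.cons_append, List.nil_append] at h H ⊢
  have hlen := h.length_eq
  simp only [List.length_cons] at hlen H
  obtain ⟨w, hb, hqw⟩ := H.of_far (by omega) hij h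
  obtain ⟨w', hw₁, hw⟩ := H.of_far (by omega) hiq.symm hqw
  refine ⟨q :: j :: w', ?_, ?_⟩
  · calc q :: b ≈ᵇ q :: j :: q :: w' := (hb.trans (hw.cons j)).cons q
      _ ≈ᵇ j :: q :: j :: w' := BraidEquiv.braid hjq.symm w'
  · calc q :: j :: w₁ ≈ᵇ q :: j :: i :: w' := (hw₁.cons j).cons q
      _ ≈ᵇ q :: i :: j :: w' := (BraidEquiv.swap hij.symm w').cons q
      _ ≈ᵇ i :: q :: j :: w' := BraidEquiv.swap hiq.symm _

theorem cube_far_adj_adj (hiq : Far i q) (hjq : Adj j q) (hij : Adj i j) :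
    Cube i q j b w₁ := fun H h => by
  rw [complement_of_far hiq.symm, complement_of_adj hjq.symm] at h
  rw [complement_of_far hiq.symm] at H
  rw [complement_of_far hiq, complement_of_adj hij, complement_of_adj hjq,
    complement_of_adj hij.symm]
  simp only [List.cons_append, List.nil_append] at h H ⊢
  have hlen := h.length_eq
  simp only [List.length_cons] at hlen H
  obtain ⟨w, hb, hqw⟩ := H.of_adj (by omega) hij h
  obtain ⟨w', hw₁, hjw⟩ := H.of_far (by omega) hiq.symm hqw
  have hlen' := hb.length_eq
  simp only [List.length_cons] at hlen'
  obtain ⟨w'', hw, hw'⟩ := H.of_adj (by omega) hjq hjw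
  refine ⟨q :: j :: i :: w'', ?_, ?_⟩
  · calc q :: b ≈ᵇ q :: j :: i :: q :: j :: w'' := (hb.trans ((hw.cons i).cons j)).cons q
      _ ≈ᵇ q :: j :: q :: i :: j :: w'' := ((BraidEquiv.swap hiq _).cons j).cons q
      _ ≈ᵇ j :: q :: j :: i :: j :: w'' := BraidEquiv.braid hjq.symm _
      _ ≈ᵇ j :: q :: i :: j :: i :: w'' := ((BraidEquiv.braid hij.symm _).cons q).cons j
      _ ≈ᵇ j :: i :: q :: j :: i :: w'' := (BraidEquiv.swap hiq.symm _).cons j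
  · calc q :: j :: w₁ ≈ᵇ q :: j :: i :: j :: q :: w'' :=
          ((hw₁.trans (hw'.cons i)).cons j).cons q
      _ ≈ᵇ q :: i :: j :: i :: q :: w'' := (BraidEquiv.braid hij.symm _).cons q
      _ ≈ᵇ i :: q :: j :: i :: q :: w'' := BraidEquiv.swap hiq.symm _
      _ ≈ᵇ i :: q :: j :: q :: i :: w'' := (((BraidEquiv.swap hiq _).cons j).cons q).cons i
      _ ≈ᵇ i :: j :: q :: j :: i :: w'' := (BraidEquiv.braid hjq.symm _).cons i

theorem cube_adj_adj_far (hiq : Adj i q) (hjq : Adj j q) (hij : Far i j) :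
    Cube i q j b w₁ := fun H h => by
  rw [complement_of_adj hiq.symm, complement_of_adj hjq.symm] at h
  rw [complement_of_adj hiq.symm] at H
  rw [complement_of_adj hiq, complement_of_far hij, complement_of_adj hjq,
    complement_of_far hij.symm]
  simp only [List.cons_append, List.nil_append] at h H ⊢
  have hlen := h.length_eq
  simp only [List.length_cons] at hlen H
  obtain ⟨w, hqb, hqw₁⟩ := H.of_far (by simp) hij h
  have hlen' := hqb.length_eq
  simp only [List.length_cons] at hlen'
  obtain ⟨v₁, hb, hw⟩ := H.of_adj (by omega) hjq.symm hqb
  obtain ⟨v₂, hw₁, hw'⟩ := H.of_adj (by omega) hiq.symm hqw₁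
  have hlen'' := hw.length_eq
  simp only [List.length_cons] at hlen''
  obtain ⟨v, hv₁, hv₂⟩ := H.of_far (by omega) hij.symm
    (H.cancel (by simp only [List.length_cons]; omega) (hw.symm.trans hw'))
  refine ⟨q :: j :: i :: q :: v, ?_, ?_⟩
  · calc q :: i :: b ≈ᵇ q :: i :: j :: q :: i :: v :=
          ((hb.trans ((hv₁.cons q).cons j)).cons i).cons q
      _ ≈ᵇ q :: j :: i :: q :: i :: v := (BraidEquiv.swap hij _).cons q
      _ ≈ᵇ q :: j :: q :: i :: q :: v := ((BraidEquiv.braid hiq _).cons j).cons q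
      _ ≈ᵇ j :: q :: j :: i :: q :: v := BraidEquiv.braid hjq.symm _
  · calc q :: j :: w₁ ≈ᵇ q :: j :: i :: q :: j :: v :=
          ((hw₁.trans ((hv₂.cons q).cons i)).cons j).cons q
      _ ≈ᵇ q :: i :: j :: q :: j :: v := (BraidEquiv.swap hij.symm _).cons q
      _ ≈ᵇ q :: i :: q :: j :: q :: v := ((BraidEquiv.braid hjq _).cons i).cons q
      _ ≈ᵇ i :: q :: i :: j :: q :: v := BraidEquiv.braid hiq.symm _
      _ ≈ᵇ i :: q :: j :: i :: q :: v := ((BraidEquiv.swap hij _).cons q).cons i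

theorem cube (i q j : Fin m) (b w₁ : List (Fin m)) : Cube i q j b w₁ := by
  rcases eq_or_ne i q with rfl | hiq
  · intro _ h
    exact ⟨w₁, by simpa using h, .refl _⟩
  rcases eq_or_ne j q with rfl | hjq
  · intro _ h
    exact ⟨b, .refl _, by simpa using h.symm⟩
  rcases eq_or_ne i j with rfl | hij
  · exact cube_self i q b w₁
  rcases far_or_adj_of_ne hiq with hiq | hiq <;> rcases far_or_adj_of_ne hjq with hjq | hjq <;>
    rcases far_or_adj_of_ne hij with hij | hij
  · exact cube_far_far hiq hjq
  · exact cube_far_far hiq hjq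
  · exact cube_far_adj_far hiq hjq hij
  · exact cube_far_adj_adj hiq hjq hij
  · exact (cube_far_adj_far hjq hiq hij.symm).swap
  · exact (cube_far_adj_adj hjq hiq hij.symm).swap
  · exact cube_adj_adj_far hiq hjq hij
  · exact absurd hij (hiq.not_adj_of_adj hjq.symm)

theorem HasLcmBelow.succ {ℓ : ℕ} (H : HasLcmBelow m ℓ) : HasLcmBelow m (ℓ + 1) := by
  intro i j u v hu h
  generalize hz : i :: u = z at h
  induction h using Relation.ReflTransGen.head_induction_on generalizing i u with
  | refl =>
    obtain ⟨rfl, rfl⟩ := List.cons.inj hz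
    exact ⟨u, by rw [complement_self]; rfl, by rw [complement_self]; rfl⟩
  | head s _ ih =>
    subst hz
    rcases s.cons_cases with ⟨u', rfl, hs⟩ | ⟨q, b, rfl, rfl⟩
    · obtain ⟨w, hu', hv⟩ := ih i u' (hs.length_eq ▸ hu) rfl
      exact ⟨w, (BraidEquiv.of_move hs).trans hu', hv⟩
    · have hlen : (complement q i ++ b).length < ℓ + 1 := by
        simpa [length_complement_comm] using hu
      obtain ⟨w₁, h₁, hv⟩ := ih q _ hlen rfl
      obtain ⟨w, hb, hw₁⟩ := cube i q j b w₁ (H.mono (Nat.lt_succ_iff.1 hlen)) h₁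
      exact ⟨w, hb, hv.trans hw₁⟩

theorem hasLcmBelow (m ℓ : ℕ) : HasLcmBelow m ℓ := by
  induction ℓ with
  | zero => exact fun _ _ u _ hu => absurd hu (Nat.not_lt_zero _)
  | succ ℓ H => exact H.succ

theorem BraidEquiv.cancel_left {r u v : List (Fin m)} (h : r ++ u ≈ᵇ r ++ v) : u ≈ᵇ v :=
  (hasLcmBelow m _).cancel_append le_rfl h

theorem BraidEquiv.cancel_right {r u v : List (Fin m)} (h : u ++ r ≈ᵇ v ++ r) : u ≈ᵇ v := by
  have h' := (BraidEquiv.cancel_left (r := r.reverse) (u := u.reverse) (v := v.reverse)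
    (by simpa using h.reverse)).reverse
  rwa [List.reverse_reverse, List.reverse_reverse] at h'

end Words

section BraidMonoid

variable {n : ℕ}

def mkWord (u : List (Fin (n - 1))) : BraidMonoid n :=
  (conGen (BraidRel n)).mk' (FreeMonoid.ofList u)

@[simp] theorem mkWord_nil : mkWord ([] : List (Fin (n - 1))) = 1 := rfl

theorem mkWord_append (u v : List (Fin (n - 1))) : mkWord (u ++ v) = mkWord u * mkWord v :=
  map_mul _ (FreeMonoid.ofList u) (FreeMonoid.ofList v)

theorem mkWord_singleton (i : Fin (n - 1)) : mkWord [i] = gen i := rfl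

theorem mkWord_cons (i : Fin (n - 1)) (u : List (Fin (n - 1))) :
    mkWord (i :: u) = gen i * mkWord u :=
  mkWord_append [i] u

theorem mkWord_surjective : Function.Surjective (mkWord (n := n)) := fun x => by
  obtain ⟨w, rfl⟩ := Con.mk'_surjective x
  exact ⟨w.toList, rfl⟩

theorem mkWord_eq_of_move {u v : List (Fin (n - 1))} (h : BraidMove (n - 1) u v) :
    mkWord u = mkWord v := by
  have rel : ∀ x y, BraidRel n x y → mkWord x.toList = mkWord y.toList := fun x y h =>
    (Con.eq _).2 (ConGen.Rel.of _ _ h)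
  cases h with
  | swap a b h =>
    have hij : mkWord [_, _] = mkWord [_, _] := h.elim (rel _ _ <| .comm _ _ ·)
      (fun h => (rel _ _ <| .comm _ _ h).symm)
    simpa [mkWord_append, mkWord_cons, mul_assoc] using congrArg (mkWord a * · * mkWord b) hij
  | braid a b h =>
    have hiji : mkWord [_, _, _] = mkWord [_, _, _] := h.elim (rel _ _ <| .braid _ _ ·)
      (fun h => (rel _ _ <| .braid _ _ h).symm)
    simpa [mkWord_append, mkWord_cons, mul_assoc] using congrArg (mkWord a * · * mkWord b) hiji

def braidCon (m : ℕ) : Con (FreeMonoid (Fin m)) where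
  r u v := BraidEquiv m u.toList v.toList
  iseqv := ⟨fun _ => .refl _, BraidEquiv.symm, BraidEquiv.trans⟩
  mul' h h' := by simpa using (h.append_right _).trans (h'.append_left _)

theorem mkWord_eq_mkWord_iff {u v : List (Fin (n - 1))} : mkWord u = mkWord v ↔ u ≈ᵇ v := by
  refine ⟨fun h => ?_, fun h => ?_⟩
  · have hle : conGen (BraidRel n) ≤ braidCon (n - 1) := Con.conGen_le.2 fun x y hxy => by
      cases hxy with
      | comm i j h => exact .of_move (BraidMove.swap [] [] (.inl h))
      | braid i j h => exact .of_move (BraidMove.braid [] [] (.inl h))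
    exact hle ((Con.eq _).1 h)
  · induction h with
    | refl => rfl
    | tail _ s ih => exact ih.trans (mkWord_eq_of_move s)

instance : IsCancelMul (BraidMonoid n) where
  mul_left_cancel := mkWord_surjective.forall.2 fun r =>
    mkWord_surjective.forall₂.2 fun u v h => by
      simp only [← mkWord_append, mkWord_eq_mkWord_iff] at h ⊢
      exact h.cancel_left
  mul_right_cancel := mkWord_surjective.forall.2 fun r =>
    mkWord_surjective.forall₂.2 fun u v h => by
      simp only [← mkWord_append, mkWord_eq_mkWord_iff] at h ⊢
      exact h.cancel_right

theorem mkWord_eq_one_iff {u : List (Fin (n - 1))} : mkWord u = 1 ↔ u = [] := by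
  refine ⟨fun h => ?_, fun h => h ▸ rfl⟩
  simpa using (mkWord_eq_mkWord_iff.1 (h.trans mkWord_nil.symm)).length_eq

theorem exists_gen_dvd_iff {z : BraidMonoid n} : (∃ i, gen i ∣ z) ↔ z ≠ 1 := by
  obtain ⟨u, rfl⟩ := mkWord_surjective z
  refine ⟨fun ⟨i, c, hc⟩ => ?_, fun hu => ?_⟩
  · obtain ⟨v, rfl⟩ := mkWord_surjective c
    simp [hc, ← mkWord_cons, mkWord_eq_one_iff]
  · rcases u with _ | ⟨i, u⟩
    · exact absurd mkWord_nil hu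
    · exact ⟨i, mkWord u, mkWord_cons i u⟩

theorem exists_mul_gen_eq_iff {z : BraidMonoid n} : (∃ i c, z = c * gen i) ↔ z ≠ 1 := by
  obtain ⟨u, rfl⟩ := mkWord_surjective z
  refine ⟨fun ⟨i, c, hc⟩ => ?_, fun hu => ?_⟩
  · obtain ⟨v, rfl⟩ := mkWord_surjective c
    simp [hc, ← mkWord_singleton, ← mkWord_append, mkWord_eq_one_iff]
  · rcases u.eq_nil_or_concat' with rfl | ⟨v, i, rfl⟩
    · exact absurd mkWord_nil hu
    · exact ⟨i, mkWord v, mkWord_append v [i]⟩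

end BraidMonoid

theorem mobius_inversion_braid_general (n : ℕ)
    (Δhat : Finset (Fin (n - 1)) → BraidMonoid n)
    (hlub_l : ∀ X : Finset (Fin (n - 1)),
      (∀ i ∈ X, ldvd (gen i) (Δhat X)) ∧
        ∀ z : BraidMonoid n, (∀ i ∈ X, ldvd (gen i) z) → ldvd (Δhat X) z)
    (hlub_r : ∀ X : Finset (Fin (n - 1)),
      (∀ i ∈ X, rdvd (gen i) (Δhat X)) ∧
        ∀ z : BraidMonoid n, (∀ i ∈ X, rdvd (gen i) z) → rdvd (Δhat X) z)
    (f h : BraidMonoid n → ℝ)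
    (hf : Summable fun x : BraidMonoid n => |f x|)
    (hh : Summable fun x : BraidMonoid n => |h x|) :
    (∀ x : BraidMonoid n,
        h x = ∑ X : Finset (Fin (n - 1)), (-1 : ℝ) ^ X.card * f (x * Δhat X)) ↔
      (∀ x : BraidMonoid n, f x = ∑' y : BraidMonoid n, h (x * y)) :=
  ⟨fun hmob x => eq_tsum_mul_of_eq_mobius gen Δhat hlub_r (fun _ => exists_mul_gen_eq_iff)
      hf.of_abs hmob x,
    fun hsum x => eq_mobius_of_eq_tsum_mul gen Δhat hlub_l (fun _ => exists_gen_dvd_iff)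
      hh.of_abs hsum x⟩

/-- Möbius inversion on `Br_n` for absolutely summable functions:
`h` is the Möbius transform of `f` iff `f(x) = Σ_y h(x·y)` for every `x`. -/
theorem mobius_inversion_braid (n : ℕ) (hn : 2 ≤ n)
    (Δhat : Finset (Fin (n - 1)) → BraidMonoid n)
    (hlub_l : ∀ X : Finset (Fin (n - 1)),
      (∀ i ∈ X, ldvd (gen i) (Δhat X)) ∧
        ∀ z : BraidMonoid n, (∀ i ∈ X, ldvd (gen i) z) → ldvd (Δhat X) z)
    (hlub_r : ∀ X : Finset (Fin (n - 1)),
      (∀ i ∈ X, rdvd (gen i) (Δhat X)) ∧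
        ∀ z : BraidMonoid n, (∀ i ∈ X, rdvd (gen i) z) → rdvd (Δhat X) z)
    (f h : BraidMonoid n → ℝ)
    (hf : Summable fun x : BraidMonoid n => |f x|)
    (hh : Summable fun x : BraidMonoid n => |h x|) :
    (∀ x : BraidMonoid n,
        h x = ∑ X : Finset (Fin (n - 1)), (-1 : ℝ) ^ X.card * f (x * Δhat X)) ↔
      (∀ x : BraidMonoid n, f x = ∑' y : BraidMonoid n, h (x * y)) :=
  mobius_inversion_braid_general n Δhat hlub_l hlub_r f h hf hh

end BraidMeasure
end
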